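/- arXiv:1211.3039 — 9 statements merged into one kernel-verified Lean document; each statement's English description precedes it below -/
import Mathlib

section
/- Let A be a finite commutative group. A 2-cocycle f : A × A → ℂˣ (with trivial action) is a 2-coboundary if and only if f(x,y) = f(y,x) for all x, y ∈ A. -/
/-!
A normalized symmetric 2-cocycle `f : A × A → D` on an abelian group `A` makes `D × A`, with
product `(a, x) (b, y) = (a b f(x, y), x y)`, an abelian group `E` containing `D` as the subgroup
`D × {1}`. If `D` is divisible, as `ℂˣ` is, it is an injective `ℤ`-module, so the inclusion
`D → E` has a retraction `r`, and `g x = r (1, x)` satisfies `f x y = g x g y g(x y)⁻¹`.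
-/

/-- A 2-cocycle on a group `A` (written multiplicatively) with values in `ℂˣ`,
for the trivial action. -/
def IsTwoCocycle {A : Type*} [Group A] (f : A → A → ℂˣ) : Prop :=
  ∀ x y z : A, f x y * f (x * y) z = f x (y * z) * f y z

/-- A 2-coboundary: a 2-cocycle of the form `f x y = g x * g y * (g (x*y))⁻¹`. -/
def IsTwoCoboundary {A : Type*} [Group A] (f : A → A → ℂˣ) : Prop :=
  ∃ g : A → ℂˣ, ∀ x y : A, f x y = g x * g y * (g (x * y))⁻¹

theorem IsAlgClosed.pow_surjective_units {K : Type*} [Field K] [IsAlgClosed K] {n : ℕ}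
    (hn : n ≠ 0) : Function.Surjective fun u : Kˣ => u ^ n := fun y => by
  obtain ⟨w, hw⟩ := IsAlgClosed.exists_pow_nat_eq (y : K) (Nat.pos_of_ne_zero hn)
  have hw0 : w ≠ 0 := by rintro rfl; exact y.ne_zero (by rw [← hw, zero_pow hn])
  exact ⟨Units.mk0 w hw0, Units.ext (by simpa using hw)⟩

theorem IsAlgClosed.baer_additive_units (K : Type*) [Field K] [IsAlgClosed K] :
    Module.Baer ℤ (Additive Kˣ) :=
  letI := divisibleByOfSMulRightSurj (Additive Kˣ) ℕ fun hn => pow_surjective_units hn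
  letI := AddGroup.divisibleByIntOfDivisibleByNat (Additive Kˣ)
  Module.Baer.of_divisible _

structure NormalizedSymmCocycle (A D : Type*) [CommGroup A] [CommGroup D] where
  f : A → A → D
  cocycle : ∀ x y z, f x y * f (x * y) z = f x (y * z) * f y z
  symm : ∀ x y, f x y = f y x
  map_one_one : f 1 1 = 1

namespace NormalizedSymmCocycle

variable {A D : Type*} [CommGroup A] [CommGroup D] (c : NormalizedSymmCocycle A D)

theorem map_one_left (y : A) : c.f 1 y = 1 := by
  simpa [c.map_one_one] using c.cocycle 1 1 y

theorem map_one_right (x : A) : c.f x 1 = 1 := c.symm x 1 ▸ c.map_one_left x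

@[ext] structure Extension (c : NormalizedSymmCocycle A D) where
  coeff : D
  base : A

instance : CommGroup c.Extension where
  mul p q := ⟨p.coeff * q.coeff * c.f p.base q.base, p.base * q.base⟩
  one := ⟨1, 1⟩
  inv p := ⟨p.coeff⁻¹ * (c.f p.base p.base⁻¹)⁻¹, p.base⁻¹⟩
  mul_assoc p q r := by
    refine Extension.ext ?_ (mul_assoc _ _ _)
    change p.coeff * q.coeff * c.f p.base q.base * r.coeff * c.f (p.base * q.base) r.base
      = p.coeff * (q.coeff * r.coeff * c.f q.base r.base) * c.f p.base (q.base * r.base)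
    calc _ = p.coeff * q.coeff * r.coeff * (c.f p.base q.base * c.f (p.base * q.base) r.base) := by
          ac_rfl
      _ = _ := by rw [c.cocycle]; ac_rfl
  one_mul p := Extension.ext (by change 1 * p.coeff * c.f 1 p.base = _; simp [map_one_left])
    (one_mul _)
  mul_one p := Extension.ext (by change p.coeff * 1 * c.f p.base 1 = _; simp [map_one_right])
    (mul_one _)
  inv_mul_cancel p := by
    refine Extension.ext ?_ (inv_mul_cancel _)
    change p.coeff⁻¹ * (c.f p.base p.base⁻¹)⁻¹ * p.coeff * c.f p.base⁻¹ p.base = 1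
    rw [c.symm p.base⁻¹, mul_comm p.coeff⁻¹, inv_mul_cancel_right, inv_mul_cancel]
  mul_comm p q := Extension.ext
    (by change _ * _ * c.f p.base q.base = _ * _ * c.f q.base p.base; rw [c.symm, mul_comm p.coeff])
    (mul_comm _ _)

def inl : D →* c.Extension where
  toFun a := ⟨a, 1⟩
  map_one' := rfl
  map_mul' a b := Extension.ext (by change a * b = a * b * c.f 1 1; rw [c.map_one_one, mul_one])
    (one_mul 1).symm

theorem inl_injective : Function.Injective c.inl := fun _ _ h => congrArg Extension.coeff h

theorem mk_one_mul_mk_one (x y : A) :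
    (⟨1, x⟩ * ⟨1, y⟩ : c.Extension) = c.inl (c.f x y) * ⟨1, x * y⟩ :=
  Extension.ext (by change 1 * 1 * c.f x y = c.f x y * 1 * c.f 1 (x * y); simp [map_one_left])
    (one_mul _).symm

theorem exists_coboundary (hD : Module.Baer ℤ (Additive D)) :
    ∃ g : A → D, ∀ x y, c.f x y = g x * g y * (g (x * y))⁻¹ := by
  obtain ⟨r, hr⟩ := hD.extension_property_addMonoidHom (MonoidHom.toAdditive c.inl)
    c.inl_injective (AddMonoidHom.id _)
  let r' : c.Extension →* D := MonoidHom.toAdditive.symm r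
  have hr' (a : D) : r' (c.inl a) = a := DFunLike.congr_fun hr a
  refine ⟨fun x => r' ⟨1, x⟩, fun x y => ?_⟩
  rw [eq_mul_inv_iff_mul_eq, ← map_mul, mk_one_mul_mk_one, map_mul, hr']

end NormalizedSymmCocycle

theorem exists_coboundary_of_symm {A D : Type*} [CommGroup A] [CommGroup D]
    (hD : Module.Baer ℤ (Additive D)) (f : A → A → D)
    (hf : ∀ x y z, f x y * f (x * y) z = f x (y * z) * f y z) (hsymm : ∀ x y, f x y = f y x) :
    ∃ g : A → D, ∀ x y, f x y = g x * g y * (g (x * y))⁻¹ := by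
  let c : NormalizedSymmCocycle A D :=
    ⟨fun x y => f x y / f 1 1, fun x y z => by simp only [div_mul_div_comm, hf],
      fun x y => by rw [hsymm], div_self' _⟩
  obtain ⟨g, hg⟩ := c.exists_coboundary hD
  refine ⟨fun x => f 1 1 * g x, fun x y => ?_⟩
  rw [mul_mul_mul_comm, mul_inv, mul_mul_mul_comm, mul_inv_cancel_right, ← hg, mul_div_cancel]

theorem stmt_2_general (A : Type*) [CommGroup A] (f : A → A → ℂˣ)
    (hf : IsTwoCocycle f) :
    IsTwoCoboundary f ↔ ∀ x y : A, f x y = f y x := by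
  refine ⟨fun ⟨g, hg⟩ x y => by rw [hg, hg, mul_comm x, mul_comm (g x)], fun hsymm => ?_⟩
  exact exists_coboundary_of_symm (IsAlgClosed.baer_additive_units ℂ) f hf hsymm

/-- Let `A` be a finite commutative group. A 2-cocycle `f : A × A → ℂˣ`
(with trivial action) is a 2-coboundary if and only if it is symmetric:
`f x y = f y x` for all `x, y ∈ A`. -/
theorem stmt_2 (A : Type*) [CommGroup A] [Finite A] (f : A → A → ℂˣ)
    (hf : IsTwoCocycle f) :
    IsTwoCoboundary f ↔ ∀ x y : A, f x y = f y x :=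
  stmt_2_general A f hf
end

section
/- Let A be a finite commutative group and c : A × A → ℂˣ a 2-cocycle (with trivial action). Then the transpose c'(x,y) := c(y,x) is again a 2-cocycle, and the pointwise product c·c' is a 2-coboundary; equivalently, the cohomology class of c' is the inverse of the cohomology class of c. -/
/-!
The product `c · c'` is a symmetric cocycle, and a symmetric cocycle on an abelian group `A`
is the same as an abelian extension `1 → ℂˣ → E → A → 1`. Since `ℂˣ` is divisible, it is an
injective abelian group, so the inclusion `ℂˣ → E` has a retraction `r : E →* ℂˣ`; restricting
`r` to the set-theoretic section `x ↦ (1, x)` trivialises the cocycle.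
-/

namespace Complex

theorem units_zpow_surjective {n : ℤ} (hn : n ≠ 0) : Function.Surjective fun u : ℂˣ => u ^ n := by
  intro u
  refine ⟨Units.mk0 (exp (log u / n)) (exp_ne_zero _), ?_⟩
  ext
  simp only [Units.val_zpow_eq_zpow_val, Units.val_mk0, ← exp_int_mul]
  rw [mul_div_cancel₀ _ (by exact_mod_cast hn), exp_log u.ne_zero]

noncomputable instance : DivisibleBy (Additive ℂˣ) ℤ :=
  divisibleByOfSMulRightSurj _ _ units_zpow_surjective

theorem units_extension_property {M N : Type*} [CommGroup M] [CommGroup N] (f : M →* N)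
    (hf : Function.Injective f) (g : M →* ℂˣ) : ∃ h : N →* ℂˣ, h.comp f = g := by
  obtain ⟨h, hh⟩ := (Module.Baer.of_divisible (Additive ℂˣ)).extension_property_addMonoidHom
    (MonoidHom.toAdditive f) hf (MonoidHom.toAdditive g)
  exact ⟨MonoidHom.toAdditive.symm h, MonoidHom.toAdditive.injective hh⟩

end Complex

namespace IsTwoCocycle

section Group

variable {A : Type*} [Group A] {f : A → A → ℂˣ}

theorem apply_one_left (hf : IsTwoCocycle f) (x : A) : f 1 x = f 1 1 := by
  simpa using (hf 1 1 x).symm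

theorem mul {f' : A → A → ℂˣ} (hf : IsTwoCocycle f) (hf' : IsTwoCocycle f') :
    IsTwoCocycle fun x y => f x y * f' x y := by
  intro x y z
  calc f x y * f' x y * (f (x * y) z * f' (x * y) z)
      = (f x y * f (x * y) z) * (f' x y * f' (x * y) z) := mul_mul_mul_comm _ _ _ _
    _ = (f x (y * z) * f y z) * (f' x (y * z) * f' y z) := by rw [hf, hf']
    _ = f x (y * z) * f' x (y * z) * (f y z * f' y z) := mul_mul_mul_comm _ _ _ _

theorem mul_const (hf : IsTwoCocycle f) (k : ℂˣ) : IsTwoCocycle fun x y => f x y * k :=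
  hf.mul fun _ _ _ => rfl

end Group

theorem swap {A : Type*} [CommGroup A] {f : A → A → ℂˣ} (hf : IsTwoCocycle f) :
    IsTwoCocycle fun x y => f y x := by
  intro x y z
  have h := hf z y x
  rw [mul_comm z y, mul_comm y x] at h
  exact (mul_comm _ _).trans (h.symm.trans (mul_comm _ _))

end IsTwoCocycle

theorem IsTwoCoboundary.mul_const {A : Type*} [Group A] {f : A → A → ℂˣ} (hf : IsTwoCoboundary f)
    (k : ℂˣ) : IsTwoCoboundary fun x y => f x y * k := by
  obtain ⟨g, hg⟩ := hf
  refine ⟨fun x => g x * k, fun x y => ?_⟩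
  dsimp only
  rw [hg, mul_inv, mul_mul_mul_comm (g x) k, mul_mul_mul_comm (g x * g y) (k * k),
    mul_inv_cancel_right]

@[ext]
structure CocycleExtension {A : Type*} (b : A → A → ℂˣ) where
  unit : ℂˣ
  base : A

namespace CocycleExtension

section Group

variable {A : Type*} [Group A] {b : A → A → ℂˣ}

instance : Mul (CocycleExtension b) :=
  ⟨fun p q => ⟨p.unit * q.unit * b p.base q.base, p.base * q.base⟩⟩

instance : One (CocycleExtension b) := ⟨⟨1, 1⟩⟩

instance : Inv (CocycleExtension b) := ⟨fun p => ⟨(p.unit * b p.base⁻¹ p.base)⁻¹, p.base⁻¹⟩⟩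

theorem mul_def (p q : CocycleExtension b) :
    p * q = ⟨p.unit * q.unit * b p.base q.base, p.base * q.base⟩ := rfl

theorem one_def : (1 : CocycleExtension b) = ⟨1, 1⟩ := rfl

theorem inv_def (p : CocycleExtension b) : p⁻¹ = ⟨(p.unit * b p.base⁻¹ p.base)⁻¹, p.base⁻¹⟩ :=
  rfl

abbrev group (hb : IsTwoCocycle b) (hb₁ : b 1 1 = 1) : Group (CocycleExtension b) :=
  Group.ofLeftAxioms
    (fun ⟨u, x⟩ ⟨v, y⟩ ⟨w, z⟩ => by
      ext : 1
      · calc u * v * b x y * w * b (x * y) z = u * v * w * (b x y * b (x * y) z) := by ac_rfl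
          _ = u * (v * w * b y z) * b x (y * z) := by rw [hb]; ac_rfl
      · exact mul_assoc x y z)
    (fun p => by
      ext : 1
      · simp [mul_def, one_def, hb.apply_one_left, hb₁]
      · exact one_mul _)
    (fun p => by
      ext : 1
      · simp only [mul_def, inv_def, one_def]
        rw [mul_assoc, inv_mul_cancel]
      · exact inv_mul_cancel _)

end Group

abbrev commGroup {A : Type*} [CommGroup A] {b : A → A → ℂˣ} (hb : IsTwoCocycle b)
    (hb₁ : b 1 1 = 1) (hsymm : ∀ x y, b x y = b y x) : CommGroup (CocycleExtension b) :=
  { group hb hb₁ with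
    mul_comm := fun p q => by
      ext : 1
      · simp only [mul_def, hsymm p.base, mul_comm p.unit]
      · exact mul_comm _ _ }

end CocycleExtension

theorem IsTwoCocycle.isTwoCoboundary_of_normalized_of_symm {A : Type*} [CommGroup A]
    {b : A → A → ℂˣ} (hb : IsTwoCocycle b) (hb₁ : b 1 1 = 1) (hsymm : ∀ x y, b x y = b y x) :
    IsTwoCoboundary b := by
  let := CocycleExtension.commGroup hb hb₁ hsymm
  let ι : ℂˣ →* CocycleExtension b :=
    { toFun u := ⟨u, 1⟩
      map_one' := rfl
      map_mul' u v := by ext : 1 <;> simp [CocycleExtension.mul_def, hb₁] }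
  obtain ⟨r, hr⟩ := Complex.units_extension_property ι
    (fun u v h => congrArg CocycleExtension.unit h) (MonoidHom.id ℂˣ)
  have hr' (u : ℂˣ) : r ⟨u, 1⟩ = u := DFunLike.congr_fun hr u
  refine ⟨fun x => r ⟨1, x⟩, fun x y => ?_⟩
  have hmul : (⟨1, x⟩ : CocycleExtension b) * ⟨1, y⟩ = ⟨b x y, 1⟩ * ⟨1, x * y⟩ := by
    ext : 1 <;> simp [CocycleExtension.mul_def, hb.apply_one_left, hb₁]
  have hr_mul := congrArg r hmul
  rw [map_mul, map_mul, hr'] at hr_mul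
  rw [hr_mul, mul_inv_cancel_right]

theorem IsTwoCocycle.isTwoCoboundary_of_symm {A : Type*} [CommGroup A] {f : A → A → ℂˣ}
    (hf : IsTwoCocycle f) (hsymm : ∀ x y, f x y = f y x) : IsTwoCoboundary f := by
  have hb := (hf.mul_const (f 1 1)⁻¹).isTwoCoboundary_of_normalized_of_symm (mul_inv_cancel _)
    fun x y => by rw [hsymm]
  simpa using hb.mul_const (f 1 1)

theorem stmt_4_general (A : Type*) [CommGroup A] (c : A → A → ℂˣ)
    (hc : IsTwoCocycle c) :
    IsTwoCocycle (fun x y => c y x) ∧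
    IsTwoCoboundary (fun x y => c x y * c y x) :=
  ⟨hc.swap, (hc.mul hc.swap).isTwoCoboundary_of_symm fun _ _ => mul_comm _ _⟩

/-- Let `A` be a finite commutative group and `c` a 2-cocycle with values
in `ℂˣ` (trivial action). Then the transpose `c' x y := c y x` is again a 2-cocycle, and
the pointwise product `c · c'` is a 2-coboundary; i.e. the class of `c'` is the inverse
of the class of `c`. -/
theorem stmt_4 (A : Type*) [CommGroup A] [Finite A] (c : A → A → ℂˣ)
    (hc : IsTwoCocycle c) :
    IsTwoCocycle (fun x y => c y x) ∧
    IsTwoCoboundary (fun x y => c x y * c y x) :=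
  stmt_4_general A c hc
end

section
/- Let H be a finite group, N a normal subgroup of H, V a nonzero finite-dimensional complex vector space, and ρ : N → GL(V) an irreducible representation. Let P : H → GL(V) be a compatible family of intertwiners for ρ. Then there exists a unique function c : H × H → ℂˣ such that P(h₁·h₂) = c(h₁,h₂)·(P(h₁)∘P(h₂)) for all h₁,h₂ ∈ H; moreover c is a 2-cocycle on H (with trivial action on ℂˣ), and c(n₁·h₁, n₂·h₂) = c(h₁,h₂) for all n₁,n₂ ∈ N and h₁,h₂ ∈ H, so that c factors through (H/N) × (H/N). -/
/-- Let `H` be a finite group, `N ⊲ H`, `V ≠ 0` a finite-dimensional complex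
vector space, `ρ : N → GL(V)` irreducible, and `P : H → GL(V)` a compatible family of
intertwiners for `ρ`. Then there is a unique `c : H × H → ℂˣ` with
`P (h₁ h₂) = c h₁ h₂ • (P h₁ ∘ P h₂)`; moreover `c` is a 2-cocycle on `H` and satisfies
`c (n₁ h₁) (n₂ h₂) = c h₁ h₂` for `n₁, n₂ ∈ N`, so it factors through `(H/N) × (H/N)`. -/
theorem stmt_7 (H : Type*) [Group H] [Finite H] (N : Subgroup H) (hN : N.Normal)
    (V : Type*) [AddCommGroup V] [Module ℂ V] [FiniteDimensional ℂ V] [Nontrivial V]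
    (ρ : N →* (V →ₗ[ℂ] V)ˣ)
    (hirr : ∀ W : Submodule ℂ V,
      (∀ (n : N) (v : V), v ∈ W → (ρ n : V →ₗ[ℂ] V) v ∈ W) → W = ⊥ ∨ W = ⊤)
    (P : H → (V →ₗ[ℂ] V)ˣ)
    (hP1 : ∀ n : N, P (n : H) = ρ n)
    (hP2 : ∀ (h : H) (n : N) (hm : h⁻¹ * (n : H) * h ∈ N),
      P h * ρ ⟨h⁻¹ * (n : H) * h, hm⟩ = ρ n * P h)
    (hP3 : ∀ (n : N) (h : H), P ((n : H) * h) = ρ n * P h) :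
    ∃ c : H → H → ℂˣ,
      (∀ h₁ h₂ : H, ((P (h₁ * h₂) : (V →ₗ[ℂ] V)ˣ) : V →ₗ[ℂ] V) =
        (c h₁ h₂ : ℂ) • ((P h₁ * P h₂ : (V →ₗ[ℂ] V)ˣ) : V →ₗ[ℂ] V)) ∧
      (∀ c' : H → H → ℂˣ,
        (∀ h₁ h₂ : H, ((P (h₁ * h₂) : (V →ₗ[ℂ] V)ˣ) : V →ₗ[ℂ] V) =
          (c' h₁ h₂ : ℂ) • ((P h₁ * P h₂ : (V →ₗ[ℂ] V)ˣ) : V →ₗ[ℂ] V)) → c' = c) ∧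
      (∀ x y z : H, c x y * c (x * y) z = c x (y * z) * c y z) ∧
      (∀ (n₁ n₂ : N) (h₁ h₂ : H), c ((n₁ : H) * h₁) ((n₂ : H) * h₂) = c h₁ h₂) := by
  classical
  obtain ⟨v₀, hv₀⟩ := exists_ne (0 : V)
  -- a unit of the endomorphism ring is injective
  have inj : ∀ T : (V →ₗ[ℂ] V)ˣ, Function.Injective (T : V →ₗ[ℂ] V) := fun T =>
    ((Module.End.isUnit_iff (T : V →ₗ[ℂ] V)).mp T.isUnit).injective
  -- scalar cancellation against a unit
  have cancel : ∀ (T : (V →ₗ[ℂ] V)ˣ) (a b : ℂ),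
      a • (T : V →ₗ[ℂ] V) = b • (T : V →ₗ[ℂ] V) → a = b := by
    intro T a b hab
    have hTv : (T : V →ₗ[ℂ] V) v₀ ≠ 0 := by
      intro h0
      exact hv₀ (inj T (by simpa using h0))
    have := congrArg (fun f : V →ₗ[ℂ] V => f v₀) hab
    simp only [LinearMap.smul_apply] at this
    exact smul_left_injective ℂ hTv this
  -- Schur's lemma
  have schur : ∀ Q : (V →ₗ[ℂ] V)ˣ, (∀ n : N, Q * ρ n = ρ n * Q) →
      ∃ μ : ℂˣ, (Q : V →ₗ[ℂ] V) = (μ : ℂ) • (1 : V →ₗ[ℂ] V) := by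
    intro Q hQ
    obtain ⟨μ, hμ⟩ := Module.End.exists_eigenvalue (Q : V →ₗ[ℂ] V)
    obtain ⟨w, hw⟩ := hμ.exists_hasEigenvector
    have hcomm : ∀ (n : N) (v : V),
        (Q : V →ₗ[ℂ] V) ((ρ n : V →ₗ[ℂ] V) v) = (ρ n : V →ₗ[ℂ] V) ((Q : V →ₗ[ℂ] V) v) := by
      intro n v
      have := congrArg (fun f : V →ₗ[ℂ] V => f v) (congrArg Units.val (hQ n))
      simpa [Module.End.mul_apply] using this
    have hinv : ∀ (n : N) (v : V), v ∈ Module.End.eigenspace (Q : V →ₗ[ℂ] V) μ →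
        (ρ n : V →ₗ[ℂ] V) v ∈ Module.End.eigenspace (Q : V →ₗ[ℂ] V) μ := by
      intro n v hv
      rw [Module.End.mem_eigenspace_iff] at hv ⊢
      rw [hcomm, hv, map_smul]
    rcases hirr _ hinv with h | h
    · exact absurd h hμ
    · have hQapp : ∀ v : V, (Q : V →ₗ[ℂ] V) v = μ • v := by
        intro v
        have : v ∈ Module.End.eigenspace (Q : V →ₗ[ℂ] V) μ := h ▸ Submodule.mem_top
        exact Module.End.mem_eigenspace_iff.mp this
      have hμ0 : μ ≠ 0 := by
        intro h0
        apply hw.2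
        apply inj Q
        rw [hQapp w, h0, zero_smul, map_zero]
      exact ⟨Units.mk0 μ hμ0, by ext v; simp [hQapp v]⟩
  -- key existence: the scalar exists for each pair
  have key : ∀ h₁ h₂ : H, ∃ μ : ℂˣ,
      ((P (h₁ * h₂) : (V →ₗ[ℂ] V)ˣ) : V →ₗ[ℂ] V) =
        (μ : ℂ) • ((P h₁ * P h₂ : (V →ₗ[ℂ] V)ˣ) : V →ₗ[ℂ] V) := by
    intro h₁ h₂
    have hB : ∀ (n : N) (hm : (h₁ * h₂)⁻¹ * (n : H) * (h₁ * h₂) ∈ N),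
        (P h₁ * P h₂) * ρ ⟨(h₁ * h₂)⁻¹ * (n : H) * (h₁ * h₂), hm⟩ = ρ n * (P h₁ * P h₂) := by
      intro n hm
      have hm1 : h₁⁻¹ * (n : H) * h₁ ∈ N := by
        simpa using hN.conj_mem (n : H) n.2 h₁⁻¹
      have hm2 : h₂⁻¹ * (h₁⁻¹ * (n : H) * h₁) * h₂ ∈ N := by
        simpa using hN.conj_mem _ hm1 h₂⁻¹
      have heq : (⟨h₂⁻¹ * ((⟨h₁⁻¹ * (n : H) * h₁, hm1⟩ : N) : H) * h₂, hm2⟩ : N)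
          = ⟨(h₁ * h₂)⁻¹ * (n : H) * (h₁ * h₂), hm⟩ := by
        apply Subtype.ext
        show h₂⁻¹ * (h₁⁻¹ * (n : H) * h₁) * h₂ = (h₁ * h₂)⁻¹ * (n : H) * (h₁ * h₂)
        group
      calc (P h₁ * P h₂) * ρ ⟨(h₁ * h₂)⁻¹ * (n : H) * (h₁ * h₂), hm⟩
          = P h₁ * (P h₂ * ρ ⟨h₂⁻¹ * ((⟨h₁⁻¹ * (n : H) * h₁, hm1⟩ : N) : H) * h₂, hm2⟩) := by
            rw [heq, mul_assoc]
        _ = P h₁ * (ρ ⟨h₁⁻¹ * (n : H) * h₁, hm1⟩ * P h₂) := by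
            rw [hP2 h₂ ⟨h₁⁻¹ * (n : H) * h₁, hm1⟩ hm2]
        _ = (P h₁ * ρ ⟨h₁⁻¹ * (n : H) * h₁, hm1⟩) * P h₂ := (mul_assoc _ _ _).symm
        _ = (ρ n * P h₁) * P h₂ := by rw [hP2 h₁ n hm1]
        _ = ρ n * (P h₁ * P h₂) := by rw [mul_assoc]
    set B := P h₁ * P h₂ with hBdef
    set Q := P (h₁ * h₂) * B⁻¹ with hQdef
    have hQcomm : ∀ n : N, Q * ρ n = ρ n * Q := by
      intro n
      have hm : (h₁ * h₂)⁻¹ * (n : H) * (h₁ * h₂) ∈ N := by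
        simpa using hN.conj_mem (n : H) n.2 (h₁ * h₂)⁻¹
      have h1 := hP2 (h₁ * h₂) n hm
      have h2 := hB n hm
      have h3 : B⁻¹ * ρ n = ρ ⟨(h₁ * h₂)⁻¹ * (n : H) * (h₁ * h₂), hm⟩ * B⁻¹ := by
        have := congrArg (fun x => B⁻¹ * x * B⁻¹) h2
        simpa [mul_assoc] using this.symm
      calc Q * ρ n = P (h₁ * h₂) * (B⁻¹ * ρ n) := by rw [hQdef, mul_assoc]
        _ = (P (h₁ * h₂) * ρ ⟨(h₁ * h₂)⁻¹ * (n : H) * (h₁ * h₂), hm⟩) * B⁻¹ := by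
            rw [h3, ← mul_assoc]
        _ = (ρ n * P (h₁ * h₂)) * B⁻¹ := by rw [h1]
        _ = ρ n * Q := by rw [hQdef, mul_assoc]
    obtain ⟨μ, hμ⟩ := schur Q hQcomm
    refine ⟨μ, ?_⟩
    have hPA : P (h₁ * h₂) = Q * B := by rw [hQdef, inv_mul_cancel_right]
    calc ((P (h₁ * h₂) : (V →ₗ[ℂ] V)ˣ) : V →ₗ[ℂ] V)
        = (Q : V →ₗ[ℂ] V) * (B : V →ₗ[ℂ] V) := by rw [hPA, Units.val_mul]
      _ = ((μ : ℂ) • (1 : V →ₗ[ℂ] V)) * (B : V →ₗ[ℂ] V) := by rw [hμ]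
      _ = (μ : ℂ) • ((B : (V →ₗ[ℂ] V)ˣ) : V →ₗ[ℂ] V) := by
          rw [smul_mul_assoc, one_mul]
  choose c hc using key
  refine ⟨c, hc, ?_, ?_, ?_⟩
  · -- uniqueness
    intro c' hc'
    funext h₁ h₂
    exact Units.ext (cancel (P h₁ * P h₂) _ _ ((hc' h₁ h₂).symm.trans (hc h₁ h₂)))
  · -- cocycle identity
    intro x y z
    have e1 : ((P (x * y * z) : (V →ₗ[ℂ] V)ˣ) : V →ₗ[ℂ] V)
        = ((c (x * y) z : ℂ) * (c x y : ℂ)) •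
          ((P x * P y * P z : (V →ₗ[ℂ] V)ˣ) : V →ₗ[ℂ] V) := by
      rw [hc (x * y) z, Units.val_mul, hc x y, smul_mul_assoc, smul_smul]
      congr 1 <;> simp [Units.val_mul, mul_assoc]
    have e2 : ((P (x * y * z) : (V →ₗ[ℂ] V)ˣ) : V →ₗ[ℂ] V)
        = ((c x (y * z) : ℂ) * (c y z : ℂ)) •
          ((P x * P y * P z : (V →ₗ[ℂ] V)ˣ) : V →ₗ[ℂ] V) := by
      rw [mul_assoc x y z, hc x (y * z), Units.val_mul, hc y z, mul_smul_comm, smul_smul]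
      congr 1 <;> simp [Units.val_mul, mul_assoc]
    have hsc : (c (x * y) z : ℂ) * (c x y : ℂ) = (c x (y * z) : ℂ) * (c y z : ℂ) :=
      cancel (P x * P y * P z) _ _ (e1.symm.trans e2)
    apply Units.ext
    push_cast
    rw [mul_comm]
    exact hsc
  · -- N-invariance
    intro n₁ n₂ h₁ h₂
    have hn' : h₁ * (n₂ : H) * h₁⁻¹ ∈ N := hN.conj_mem (n₂ : H) n₂.2 h₁
    set n' : N := ⟨h₁ * (n₂ : H) * h₁⁻¹, hn'⟩ with hn'def
    have heq : h₁⁻¹ * (n' : H) * h₁ = (n₂ : H) := by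
      show h₁⁻¹ * (h₁ * (n₂ : H) * h₁⁻¹) * h₁ = (n₂ : H)
      group
    have hmem : h₁⁻¹ * (n' : H) * h₁ ∈ N := heq ▸ n₂.2
    have hswap : P h₁ * ρ n₂ = ρ n' * P h₁ := by
      have h := hP2 h₁ n' hmem
      rwa [show (⟨h₁⁻¹ * (n' : H) * h₁, hmem⟩ : N) = n₂ from Subtype.ext heq] at h
    have egrp : ((n₁ : H) * h₁) * ((n₂ : H) * h₂) = (n₁ : H) * ((n' : H) * (h₁ * h₂)) := by
      show ((n₁ : H) * h₁) * ((n₂ : H) * h₂) = (n₁ : H) * ((h₁ * (n₂ : H) * h₁⁻¹) * (h₁ * h₂))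
      group
    have lhs : ((P (((n₁ : H) * h₁) * ((n₂ : H) * h₂)) : (V →ₗ[ℂ] V)ˣ) : V →ₗ[ℂ] V)
        = (c h₁ h₂ : ℂ) • ((ρ n₁ * (ρ n' * (P h₁ * P h₂)) : (V →ₗ[ℂ] V)ˣ) : V →ₗ[ℂ] V) := by
      rw [egrp, hP3 n₁, hP3 n']
      rw [Units.val_mul, Units.val_mul, hc h₁ h₂, mul_smul_comm, mul_smul_comm]
      congr 1 <;> simp [Units.val_mul, mul_assoc]
    have hrhs : P ((n₁ : H) * h₁) * P ((n₂ : H) * h₂) = ρ n₁ * (ρ n' * (P h₁ * P h₂)) := by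
      rw [hP3 n₁ h₁, hP3 n₂ h₂]
      calc ρ n₁ * P h₁ * (ρ n₂ * P h₂) = ρ n₁ * ((P h₁ * ρ n₂) * P h₂) := by
            rw [mul_assoc, ← mul_assoc (P h₁)]
        _ = ρ n₁ * ((ρ n' * P h₁) * P h₂) := by rw [hswap]
        _ = ρ n₁ * (ρ n' * (P h₁ * P h₂)) := by rw [mul_assoc]
    have lhs2 := hc ((n₁ : H) * h₁) ((n₂ : H) * h₂)
    rw [hrhs] at lhs2
    exact Units.ext (cancel (ρ n₁ * (ρ n' * (P h₁ * P h₂))) _ _ (lhs2.symm.trans lhs))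
end

section
/- Let H be a finite group, N a normal subgroup of H, V a nonzero finite-dimensional complex vector space, and ρ : N → GL(V) an irreducible representation. Let P and P' be two compatible families of intertwiners for ρ, with associated functions c and c' determined by P(h₁h₂) = c(h₁,h₂)·P(h₁)∘P(h₂) and P'(h₁h₂) = c'(h₁,h₂)·P'(h₁)∘P'(h₂). Then there exists a function g : H → ℂˣ with g(n·h) = g(h) for all n ∈ N and h ∈ H, such that c'(h₁,h₂) = c(h₁,h₂)·g(h₁)·g(h₂)·g(h₁·h₂)⁻¹ for all h₁,h₂ ∈ H. In particular the cohomology class of the induced 2-cocycle on H/N is independent of the choice of compatible family. -/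
/-- Let `H` be a finite group, `N ⊲ H`, `V ≠ 0` finite-dimensional over `ℂ`,
`ρ : N → GL(V)` irreducible, and `P, P'` two compatible families of intertwiners for `ρ`,
with associated functions `c, c'` (so `P (h₁h₂) = c h₁ h₂ • P h₁ ∘ P h₂` and similarly
for `P', c'`). Then there is `g : H → ℂˣ`, constant on cosets of `N`, with
`c' h₁ h₂ = c h₁ h₂ * g h₁ * g h₂ * (g (h₁ h₂))⁻¹`; in particular the class of the
induced 2-cocycle on `H/N` is independent of the choice of compatible family. -/
theorem stmt_8 (H : Type*) [Group H] [Finite H] (N : Subgroup H) (hN : N.Normal)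
    (V : Type*) [AddCommGroup V] [Module ℂ V] [FiniteDimensional ℂ V] [Nontrivial V]
    (ρ : N →* (V →ₗ[ℂ] V)ˣ)
    (hirr : ∀ W : Submodule ℂ V,
      (∀ (n : N) (v : V), v ∈ W → (ρ n : V →ₗ[ℂ] V) v ∈ W) → W = ⊥ ∨ W = ⊤)
    (P P' : H → (V →ₗ[ℂ] V)ˣ)
    (hP1 : ∀ n : N, P (n : H) = ρ n)
    (hP2 : ∀ (h : H) (n : N) (hm : h⁻¹ * (n : H) * h ∈ N),
      P h * ρ ⟨h⁻¹ * (n : H) * h, hm⟩ = ρ n * P h)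
    (hP3 : ∀ (n : N) (h : H), P ((n : H) * h) = ρ n * P h)
    (hP'1 : ∀ n : N, P' (n : H) = ρ n)
    (hP'2 : ∀ (h : H) (n : N) (hm : h⁻¹ * (n : H) * h ∈ N),
      P' h * ρ ⟨h⁻¹ * (n : H) * h, hm⟩ = ρ n * P' h)
    (hP'3 : ∀ (n : N) (h : H), P' ((n : H) * h) = ρ n * P' h)
    (c c' : H → H → ℂˣ)
    (hc : ∀ h₁ h₂ : H, ((P (h₁ * h₂) : (V →ₗ[ℂ] V)ˣ) : V →ₗ[ℂ] V) =
      (c h₁ h₂ : ℂ) • ((P h₁ * P h₂ : (V →ₗ[ℂ] V)ˣ) : V →ₗ[ℂ] V))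
    (hc' : ∀ h₁ h₂ : H, ((P' (h₁ * h₂) : (V →ₗ[ℂ] V)ˣ) : V →ₗ[ℂ] V) =
      (c' h₁ h₂ : ℂ) • ((P' h₁ * P' h₂ : (V →ₗ[ℂ] V)ˣ) : V →ₗ[ℂ] V)) :
    ∃ g : H → ℂˣ,
      (∀ (n : N) (h : H), g ((n : H) * h) = g h) ∧
      (∀ h₁ h₂ : H, c' h₁ h₂ = c h₁ h₂ * g h₁ * g h₂ * (g (h₁ * h₂))⁻¹) := by
  classical
  -- Step 1: Schur's lemma
  have uniq : ∀ (A : (V →ₗ[ℂ] V)ˣ) (μ ν : ℂ),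
      μ • (A : V →ₗ[ℂ] V) = ν • (A : V →ₗ[ℂ] V) → μ = ν := by
    intro A μ ν hA
    obtain ⟨v, hv⟩ := exists_ne (0 : V)
    have hAv : (A : V →ₗ[ℂ] V) v ≠ 0 := by
      intro h0
      apply hv
      have hinj : Function.Injective (A : V →ₗ[ℂ] V) :=
        (Module.End.isUnit_iff _ |>.mp A.isUnit).injective
      exact hinj (by simpa using h0)
    have := congrArg (fun f : V →ₗ[ℂ] V => f v) hA
    simp only [LinearMap.smul_apply] at this
    exact smul_left_injective ℂ hAv this
  have schur : ∀ T : (V →ₗ[ℂ] V)ˣ,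
      (∀ n : N, (T : (V →ₗ[ℂ] V)ˣ) * ρ n = ρ n * T) →
      ∃ μ : ℂˣ, (T : V →ₗ[ℂ] V) = (μ : ℂ) • 1 := by
    intro T hT
    obtain ⟨μ, hμ⟩ := Module.End.exists_eigenvalue (T : V →ₗ[ℂ] V)
    set W := Module.End.eigenspace (T : V →ₗ[ℂ] V) μ with hWdef
    have hWinv : ∀ (n : N) (v : V), v ∈ W → (ρ n : V →ₗ[ℂ] V) v ∈ W := by
      intro n v hv
      rw [Module.End.mem_eigenspace_iff] at hv ⊢
      have := congrArg (fun f : (V →ₗ[ℂ] V)ˣ => (f : V →ₗ[ℂ] V) v) (hT n)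
      simp only [Units.val_mul, Module.End.mul_apply] at this
      rw [this, hv, map_smul]
    have hne : W ≠ ⊥ := hμ
    have hWtop : W = ⊤ := (hirr W hWinv).resolve_left hne
    have hμ0 : μ ≠ 0 := by
      intro h0
      obtain ⟨v, hv⟩ := exists_ne (0 : V)
      have hvW : v ∈ W := hWtop ▸ Submodule.mem_top
      rw [Module.End.mem_eigenspace_iff, h0, zero_smul] at hvW
      have hinj : Function.Injective (T : V →ₗ[ℂ] V) :=
        (Module.End.isUnit_iff _ |>.mp T.isUnit).injective
      exact hv (hinj (by simpa using hvW))
    refine ⟨Units.mk0 μ hμ0, ?_⟩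
    ext v
    have hvW : v ∈ W := hWtop ▸ Submodule.mem_top
    rw [Module.End.mem_eigenspace_iff] at hvW
    simpa using hvW
  -- Step 2: for each h, P' h is a scalar multiple of P h
  have key : ∀ h : H, ∃ μ : ℂˣ, ((P' h : (V →ₗ[ℂ] V)ˣ) : V →ₗ[ℂ] V)
      = (μ : ℂ) • ((P h : (V →ₗ[ℂ] V)ˣ) : V →ₗ[ℂ] V) := by
    intro h
    have hcomm : ∀ n : N, (P' h * (P h)⁻¹) * ρ n = ρ n * (P' h * (P h)⁻¹) := by
      intro n
      have hm : h⁻¹ * (n : H) * h ∈ N := hN.conj_mem' (n : H) n.2 h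
      have h1 := hP2 h n hm
      have h2 := hP'2 h n hm
      -- ρ ⟨...⟩ = (P h)⁻¹ * ρ n * P h
      have h1' : (ρ ⟨h⁻¹ * (n : H) * h, hm⟩ : (V →ₗ[ℂ] V)ˣ) = (P h)⁻¹ * (ρ n * P h) := by
        rw [← h1]; group
      have := h2
      rw [h1'] at this
      calc (P' h * (P h)⁻¹) * ρ n = (P' h * ((P h)⁻¹ * (ρ n * P h))) * (P h)⁻¹ := by group
        _ = (ρ n * P' h) * (P h)⁻¹ := by rw [this]
        _ = ρ n * (P' h * (P h)⁻¹) := by group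
    obtain ⟨μ, hμ⟩ := schur (P' h * (P h)⁻¹) hcomm
    refine ⟨μ, ?_⟩
    have : ((P' h : (V →ₗ[ℂ] V)ˣ) : V →ₗ[ℂ] V)
        = ((P' h * (P h)⁻¹ : (V →ₗ[ℂ] V)ˣ) : V →ₗ[ℂ] V) * (P h : V →ₗ[ℂ] V) := by
      have : P' h = (P' h * (P h)⁻¹) * P h := by group
      rw [← Units.val_mul, ← this]
    rw [this, hμ, smul_mul_assoc, one_mul]
  set lam : H → ℂˣ := fun h => Classical.choose (key h) with hlam
  have hlamspec : ∀ h : H, ((P' h : (V →ₗ[ℂ] V)ˣ) : V →ₗ[ℂ] V)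
      = (lam h : ℂ) • ((P h : (V →ₗ[ℂ] V)ˣ) : V →ₗ[ℂ] V) := fun h => Classical.choose_spec (key h)
  refine ⟨fun h => (lam h)⁻¹, ?_, ?_⟩
  · -- constance on cosets
    intro n h
    rw [inv_inj]
    apply Units.ext
    apply uniq (P ((n : H) * h))
    rw [← hlamspec]
    have e1 : ((P' ((n : H) * h) : (V →ₗ[ℂ] V)ˣ) : V →ₗ[ℂ] V)
        = (ρ n : V →ₗ[ℂ] V) * ((P' h : (V →ₗ[ℂ] V)ˣ) : V →ₗ[ℂ] V) := by
      rw [hP'3 n h, Units.val_mul]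
    have e2 : ((P ((n : H) * h) : (V →ₗ[ℂ] V)ˣ) : V →ₗ[ℂ] V)
        = (ρ n : V →ₗ[ℂ] V) * ((P h : (V →ₗ[ℂ] V)ˣ) : V →ₗ[ℂ] V) := by
      rw [hP3 n h, Units.val_mul]
    rw [e1, e2, hlamspec h, mul_smul_comm]
  · intro h₁ h₂
    have heq : (c' h₁ h₂ : ℂ) * (lam h₁ : ℂ) * (lam h₂ : ℂ)
        = (c h₁ h₂ : ℂ) * (lam (h₁ * h₂) : ℂ) := by
      apply uniq (P h₁ * P h₂)
      have lhs : ((c' h₁ h₂ : ℂ) * (lam h₁ : ℂ) * (lam h₂ : ℂ))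
          • ((P h₁ * P h₂ : (V →ₗ[ℂ] V)ˣ) : V →ₗ[ℂ] V)
          = ((P' (h₁ * h₂) : (V →ₗ[ℂ] V)ˣ) : V →ₗ[ℂ] V) := by
        rw [hc' h₁ h₂, Units.val_mul, Units.val_mul, hlamspec h₁, hlamspec h₂]
        rw [smul_mul_assoc, mul_smul_comm, ← smul_assoc, ← smul_assoc]
        congr 1 <;> (simp only [smul_eq_mul]; ring)
      have rhs : ((c h₁ h₂ : ℂ) * (lam (h₁ * h₂) : ℂ))
          • ((P h₁ * P h₂ : (V →ₗ[ℂ] V)ˣ) : V →ₗ[ℂ] V)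
          = ((P' (h₁ * h₂) : (V →ₗ[ℂ] V)ˣ) : V →ₗ[ℂ] V) := by
        rw [hlamspec (h₁ * h₂), hc h₁ h₂, ← smul_assoc]
        congr 1 <;> (simp only [smul_eq_mul]; ring)
      rw [lhs, rhs]
    apply Units.ext
    have h1 : (lam h₁ : ℂ) ≠ 0 := Units.ne_zero _
    have h2 : (lam h₂ : ℂ) ≠ 0 := Units.ne_zero _
    push_cast
    rw [inv_inv]
    field_simp
    linear_combination heq
end

section
/- Let S be a finite group, Z a subgroup of the center of S such that the quotient S/Z is commutative, and ι : Z → ℂˣ an injective group homomorphism. Let ρ : S → GL(V) be a finite-dimensional complex representation with ρ(z) = ι(z)·id_V for all z ∈ Z. Then the character of ρ vanishes off the center: trace(ρ(s)) = 0 for every s ∈ S not lying in the center of S. -/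
/-- Let `S` be a finite group, `Z` a central subgroup with `S/Z`
commutative, and `ι : Z → ℂˣ` an injective homomorphism. If `ρ : S → GL(V)` is a
finite-dimensional complex representation with `ρ z = ι z • id` for all `z ∈ Z`, then
`trace (ρ s) = 0` for every `s` outside the center of `S`. -/
theorem stmt_10 (S : Type*) [Group S] [Finite S] (Z : Subgroup S)
    (hZ : Z ≤ Subgroup.center S)
    (hcomm : ∀ a b : S, a * b * a⁻¹ * b⁻¹ ∈ Z)
    (ι : Z →* ℂˣ) (hι : Function.Injective ι)
    (V : Type*) [AddCommGroup V] [Module ℂ V] [FiniteDimensional ℂ V]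
    (ρ : S →* (V →ₗ[ℂ] V)ˣ)
    (hρ : ∀ z : Z, ((ρ (z : S) : (V →ₗ[ℂ] V)ˣ) : V →ₗ[ℂ] V) =
      (ι z : ℂ) • (1 : V →ₗ[ℂ] V)) :
    ∀ s : S, s ∉ Subgroup.center S →
      LinearMap.trace ℂ V ((ρ s : (V →ₗ[ℂ] V)ˣ) : V →ₗ[ℂ] V) = 0 := by
  intro s hs
  rw [Subgroup.mem_center_iff] at hs
  push_neg at hs
  obtain ⟨t, ht⟩ := hs
  set c : Z := ⟨t * s * t⁻¹ * s⁻¹, hcomm t s⟩ with hc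
  have hc1 : c ≠ 1 := by
    intro h
    apply ht
    have h' : t * s * t⁻¹ * s⁻¹ = 1 := by
      have := congrArg (Subtype.val) h
      simpa [hc] using this
    have h2 : t * s * t⁻¹ = s := mul_inv_eq_one.mp h'
    have h3 : t * s = s * t := mul_inv_eq_iff_eq_mul.mp h2
    exact h3
  have hιc : (ι c : ℂ) ≠ 1 := by
    intro h
    apply hc1
    apply hι
    ext
    simpa using h
  -- conjugation identity
  have key : ((ρ (t * s * t⁻¹) : (V →ₗ[ℂ] V)ˣ) : V →ₗ[ℂ] V) =
      (ι c : ℂ) • ((ρ s : (V →ₗ[ℂ] V)ˣ) : V →ₗ[ℂ] V) := by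
    have h1 : t * s * t⁻¹ = (c : S) * s := by
      simp [hc, mul_assoc]
    rw [h1, map_mul]
    push_cast
    rw [hρ c]
    rw [smul_mul_assoc, one_mul]
  -- trace invariance under conjugation
  have htr : LinearMap.trace ℂ V ((ρ (t * s * t⁻¹) : (V →ₗ[ℂ] V)ˣ) : V →ₗ[ℂ] V) =
      LinearMap.trace ℂ V ((ρ s : (V →ₗ[ℂ] V)ˣ) : V →ₗ[ℂ] V) := by
    have h2 : ((ρ (t * s * t⁻¹) : (V →ₗ[ℂ] V)ˣ) : V →ₗ[ℂ] V) =
        (((ρ t : (V →ₗ[ℂ] V)ˣ) : V →ₗ[ℂ] V) * ((ρ s : (V →ₗ[ℂ] V)ˣ) : V →ₗ[ℂ] V)) *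
          (((ρ t)⁻¹ : (V →ₗ[ℂ] V)ˣ) : V →ₗ[ℂ] V) := by
      rw [map_mul, map_mul, map_inv]
      push_cast
      ring
    rw [h2, LinearMap.trace_mul_comm]
    have h3 : (((ρ t)⁻¹ : (V →ₗ[ℂ] V)ˣ) : V →ₗ[ℂ] V) * ((ρ t : (V →ₗ[ℂ] V)ˣ) : V →ₗ[ℂ] V)
        = 1 := by
      rw [← Units.val_mul, inv_mul_cancel, Units.val_one]
    rw [← mul_assoc, h3, one_mul]
  rw [key, map_smul, smul_eq_mul] at htr
  have : ((ι c : ℂ) - 1) * LinearMap.trace ℂ V ((ρ s : (V →ₗ[ℂ] V)ˣ) : V →ₗ[ℂ] V) = 0 := by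
    ring_nf
    linear_combination htr
  rcases mul_eq_zero.mp this with h | h
  · exact absurd (sub_eq_zero.mp h) hιc
  · exact h
end

section
/- Let S be a finite group, Z a subgroup of the center of S such that the quotient S/Z is commutative, and ι : Z → ℂˣ an injective group homomorphism. Let ρ₁ : S → GL(V₁) and ρ₂ : S → GL(V₂) be finite-dimensional irreducible complex representations such that ρᵢ(z) = ι(z)·id for all z ∈ Z (i = 1,2), and suppose ρ₁ and ρ₂ have the same central character, i.e. there is a function ω : Z(S) → ℂˣ on the center Z(S) of S with ρᵢ(z) = ω(z)·id for all z ∈ Z(S) and i = 1,2. Then ρ₁ and ρ₂ are isomorphic as representations of S. -/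
open LinearMap Module

section stmt11aux

variable {S : Type*} [Group S] {V : Type*} [AddCommGroup V] [Module ℂ V]

/-- Auxiliary: the character of a representation with injective central character on a
subgroup `Z` containing all commutators vanishes off the center. -/
lemma stmt11_char_vanish (Z : Subgroup S)
    (hcomm : ∀ a b : S, a * b * a⁻¹ * b⁻¹ ∈ Z)
    (ι : Z →* ℂˣ) (hι : Function.Injective ι)
    (ρ : S →* (V →ₗ[ℂ] V)ˣ)
    (hρ : ∀ z : Z, ((ρ (z : S) : (V →ₗ[ℂ] V)ˣ) : V →ₗ[ℂ] V) =
      (ι z : ℂ) • (1 : V →ₗ[ℂ] V))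
    (s : S) (hs : s ∉ Subgroup.center S) :
    LinearMap.trace ℂ V ((ρ s : V →ₗ[ℂ] V)) = 0 := by
  rw [Subgroup.mem_center_iff] at hs
  push_neg at hs
  obtain ⟨t, ht⟩ := hs
  set ρ' : S →* (V →ₗ[ℂ] V) := (Units.coeHom _).comp ρ with hρ'
  set z : Z := ⟨t * s * t⁻¹ * s⁻¹, hcomm t s⟩ with hz
  have hz1 : z ≠ 1 := by
    intro h
    apply ht
    have h' : t * s * t⁻¹ * s⁻¹ = 1 := congrArg Subtype.val h
    have : (t * s) * (s * t)⁻¹ = 1 := by simpa [mul_assoc] using h'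
    exact mul_inv_eq_one.mp this
  have hιz : (ι z : ℂ) ≠ 1 := by
    intro h
    exact hz1 (hι (Units.ext (by simpa using h)))
  have hts : t * s * t⁻¹ = (z : S) * s := by simp [hz, mul_assoc]
  have h1 : LinearMap.trace ℂ V (ρ' (t * s * t⁻¹)) = LinearMap.trace ℂ V (ρ' s) := by
    rw [map_mul ρ' (t * s) t⁻¹, LinearMap.trace_mul_comm, ← map_mul ρ']
    congr 1
    group
  have h2 : ρ' ((z : S) * s) = (ι z : ℂ) • ρ' s := by
    rw [map_mul]
    have : ρ' (z : S) = (ι z : ℂ) • (1 : V →ₗ[ℂ] V) := hρ z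
    rw [this, smul_mul_assoc, one_mul]
  have key : LinearMap.trace ℂ V (ρ' s) = (ι z : ℂ) * LinearMap.trace ℂ V (ρ' s) := by
    conv_lhs => rw [← h1, hts, h2]
    rw [map_smul, smul_eq_mul]
  have hmul : ((ι z : ℂ) - 1) * LinearMap.trace ℂ V (ρ' s) = 0 := by
    rw [sub_mul, one_mul, ← key, sub_self]
  rcases mul_eq_zero.mp hmul with h | h
  · exact absurd (sub_eq_zero.mp h) hιz
  · exact h

/-- Auxiliary: trace of the conjugation action on `Hom(V₁, V₂)` is the product of the traces. -/
lemma stmt11_trace_linHom {V₁ V₂ : Type*}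
    [AddCommGroup V₁] [Module ℂ V₁] [FiniteDimensional ℂ V₁]
    [AddCommGroup V₂] [Module ℂ V₂] [FiniteDimensional ℂ V₂]
    (ρ₁' : Representation ℂ S V₁) (ρ₂' : Representation ℂ S V₂) (g : S) :
    LinearMap.trace ℂ _ ((Representation.linHom ρ₁' ρ₂') g) =
      LinearMap.trace ℂ V₁ (ρ₁' g⁻¹) * LinearMap.trace ℂ V₂ (ρ₂' g) := by
  let e := dualTensorHomEquiv ℂ V₁ V₂
  have hconj : (Representation.linHom ρ₁' ρ₂') g =
      e.conj (TensorProduct.map (ρ₁'.dual g) (ρ₂' g)) := by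
    refine LinearMap.ext fun x => ?_
    rw [LinearEquiv.conj_apply]
    have hcomm := Representation.dualTensorHom_comm ρ₁' ρ₂' g
    have h := LinearMap.congr_fun hcomm (e.symm x)
    simp only [LinearMap.coe_comp, Function.comp_apply, LinearEquiv.coe_coe] at h ⊢
    have he : ∀ y, e y = dualTensorHom ℂ V₁ V₂ y := fun y => by
      simp [e, dualTensorHomEquiv]
    rw [he, h, ← he, e.apply_symm_apply]
  rw [hconj, LinearMap.trace_conj', trace_tensorProduct', Representation.dual_apply,
    trace_transpose']

end stmt11aux

/-- Let `S` be a finite group, `Z` a central subgroup with `S/Z`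
commutative, `ι : Z → ℂˣ` injective. Two finite-dimensional irreducible complex
representations `ρ₁, ρ₂` of `S` with `ρᵢ z = ι z • id` on `Z` and with the same central
character (a function `ω` on the center with `ρᵢ z = ω z • id` there) are isomorphic. -/
theorem stmt_11 (S : Type*) [Group S] [Finite S] (Z : Subgroup S)
    (hZ : Z ≤ Subgroup.center S)
    (hcomm : ∀ a b : S, a * b * a⁻¹ * b⁻¹ ∈ Z)
    (ι : Z →* ℂˣ) (hι : Function.Injective ι)
    (V₁ V₂ : Type*)
    [AddCommGroup V₁] [Module ℂ V₁] [FiniteDimensional ℂ V₁] [Nontrivial V₁]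
    [AddCommGroup V₂] [Module ℂ V₂] [FiniteDimensional ℂ V₂] [Nontrivial V₂]
    (ρ₁ : S →* (V₁ →ₗ[ℂ] V₁)ˣ) (ρ₂ : S →* (V₂ →ₗ[ℂ] V₂)ˣ)
    (hirr₁ : ∀ W : Submodule ℂ V₁,
      (∀ (s : S) (v : V₁), v ∈ W → (ρ₁ s : V₁ →ₗ[ℂ] V₁) v ∈ W) → W = ⊥ ∨ W = ⊤)
    (hirr₂ : ∀ W : Submodule ℂ V₂,
      (∀ (s : S) (v : V₂), v ∈ W → (ρ₂ s : V₂ →ₗ[ℂ] V₂) v ∈ W) → W = ⊥ ∨ W = ⊤)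
    (hρ₁ : ∀ z : Z, ((ρ₁ (z : S) : (V₁ →ₗ[ℂ] V₁)ˣ) : V₁ →ₗ[ℂ] V₁) =
      (ι z : ℂ) • (1 : V₁ →ₗ[ℂ] V₁))
    (hρ₂ : ∀ z : Z, ((ρ₂ (z : S) : (V₂ →ₗ[ℂ] V₂)ˣ) : V₂ →ₗ[ℂ] V₂) =
      (ι z : ℂ) • (1 : V₂ →ₗ[ℂ] V₂))
    (ω : Subgroup.center S → ℂˣ)
    (hω₁ : ∀ z : Subgroup.center S, ((ρ₁ (z : S) : (V₁ →ₗ[ℂ] V₁)ˣ) : V₁ →ₗ[ℂ] V₁) =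
      (ω z : ℂ) • (1 : V₁ →ₗ[ℂ] V₁))
    (hω₂ : ∀ z : Subgroup.center S, ((ρ₂ (z : S) : (V₂ →ₗ[ℂ] V₂)ˣ) : V₂ →ₗ[ℂ] V₂) =
      (ω z : ℂ) • (1 : V₂ →ₗ[ℂ] V₂)) :
    ∃ T : V₁ ≃ₗ[ℂ] V₂, ∀ (s : S) (v : V₁),
      T ((ρ₁ s : V₁ →ₗ[ℂ] V₁) v) = (ρ₂ s : V₂ →ₗ[ℂ] V₂) (T v) := by
  classical
  letI : Fintype S := Fintype.ofFinite S
  haveI : Invertible ((Fintype.card S : ℂ)) :=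
    invertibleOfNonzero (by exact_mod_cast Fintype.card_ne_zero)
  set ρ₁' : Representation ℂ S V₁ := (Units.coeHom _).comp ρ₁ with hr1
  set ρ₂' : Representation ℂ S V₂ := (Units.coeHom _).comp ρ₂ with hr2
  set π : Representation ℂ S (V₁ →ₗ[ℂ] V₂) := Representation.linHom ρ₁' ρ₂' with hπ
  set d₁ : ℂ := (finrank ℂ V₁ : ℂ) with hd1
  set d₂ : ℂ := (finrank ℂ V₂ : ℂ) with hd2
  set F : S → ℂ := fun g => LinearMap.trace ℂ V₁ (ρ₁' g⁻¹) * LinearMap.trace ℂ V₂ (ρ₂' g)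
    with hF
  -- Average of the character of `π` equals the dimension of the space of invariants.
  have havg : ⅟(Fintype.card S : ℂ) • ∑ g : S, F g = (finrank ℂ π.invariants : ℂ) := by
    have h1 : ∑ g : S, F g = ∑ g : S, LinearMap.trace ℂ _ (π g) :=
      Finset.sum_congr rfl fun g _ => (stmt11_trace_linHom ρ₁' ρ₂' g).symm
    rw [h1, ← (Representation.isProj_averageMap π).trace]
    simp [GroupAlgebra.average, _root_.map_sum]
  -- Terms of `F` vanish off the center.
  have hvanish : ∀ g : S, g ∉ Subgroup.center S → F g = 0 := by
    intro g hg
    have := stmt11_char_vanish Z hcomm ι hι ρ₂ hρ₂ g hg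
    simp only [hF]
    rw [show LinearMap.trace ℂ V₂ (ρ₂' g) = 0 from this, mul_zero]
  -- Terms of `F` on the center equal `d₁ * d₂`.
  have hcenter : ∀ g : S, g ∈ Subgroup.center S → F g = d₁ * d₂ := by
    intro g hg
    have hginv : g⁻¹ ∈ Subgroup.center S := inv_mem hg
    have e1 : (ρ₁' g⁻¹ : V₁ →ₗ[ℂ] V₁) =
        (ω ⟨g⁻¹, hginv⟩ : ℂ) • (1 : V₁ →ₗ[ℂ] V₁) := hω₁ ⟨g⁻¹, hginv⟩
    have e1' : (ρ₁' g : V₁ →ₗ[ℂ] V₁) =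
        (ω ⟨g, hg⟩ : ℂ) • (1 : V₁ →ₗ[ℂ] V₁) := hω₁ ⟨g, hg⟩
    have e2 : (ρ₂' g : V₂ →ₗ[ℂ] V₂) =
        (ω ⟨g, hg⟩ : ℂ) • (1 : V₂ →ₗ[ℂ] V₂) := hω₂ ⟨g, hg⟩
    have hunit : (ω ⟨g⁻¹, hginv⟩ : ℂ) * (ω ⟨g, hg⟩ : ℂ) = 1 := by
      have hmul : ρ₁' g⁻¹ * ρ₁' g = 1 := by
        rw [← map_mul, inv_mul_cancel, map_one]
      rw [e1, e1'] at hmul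
      have hstep : ((ω ⟨g⁻¹, hginv⟩ : ℂ) * (ω ⟨g, hg⟩ : ℂ)) • (1 : V₁ →ₗ[ℂ] V₁) =
          ((ω ⟨g⁻¹, hginv⟩ : ℂ) • (1 : V₁ →ₗ[ℂ] V₁)) * ((ω ⟨g, hg⟩ : ℂ) • 1) := by
        rw [smul_mul_assoc, one_mul, mul_smul]
      have hmul' : ((ω ⟨g⁻¹, hginv⟩ : ℂ) * (ω ⟨g, hg⟩ : ℂ)) • (1 : V₁ →ₗ[ℂ] V₁) = 1 :=
        hstep.trans hmul
      obtain ⟨v, hv⟩ := exists_ne (0 : V₁)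
      have := LinearMap.congr_fun hmul' v
      simp only [LinearMap.smul_apply, Module.End.one_apply] at this
      have hsub : ((ω ⟨g⁻¹, hginv⟩ : ℂ) * (ω ⟨g, hg⟩ : ℂ) - 1) • v = 0 := by
        rw [sub_smul, one_smul, this, sub_self]
      rcases smul_eq_zero.mp hsub with h | h
      · exact sub_eq_zero.mp h
      · exact absurd h hv
    simp only [hF]
    rw [e1, e2, map_smul, map_smul, trace_one, trace_one, smul_eq_mul, smul_eq_mul]
    calc (ω ⟨g⁻¹, hginv⟩ : ℂ) * d₁ * ((ω ⟨g, hg⟩ : ℂ) * d₂)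
        = ((ω ⟨g⁻¹, hginv⟩ : ℂ) * (ω ⟨g, hg⟩ : ℂ)) * (d₁ * d₂) := by ring
      _ = d₁ * d₂ := by rw [hunit, one_mul]
  -- The sum is nonzero.
  have hsum_ne : ∑ g : S, F g ≠ 0 := by
    have hfilter : ∑ g ∈ Finset.univ.filter (fun g : S => g ∈ Subgroup.center S), F g
        = ∑ g : S, F g := by
      refine Finset.sum_filter_of_ne fun x _ hx => ?_
      by_contra hc
      exact hx (hvanish x hc)
    rw [← hfilter]
    have hconst : ∑ g ∈ Finset.univ.filter (fun g : S => g ∈ Subgroup.center S), F g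
        = (Finset.univ.filter (fun g : S => g ∈ Subgroup.center S)).card • (d₁ * d₂) := by
      rw [Finset.sum_congr rfl fun g hgm => hcenter g (Finset.mem_filter.mp hgm).2,
        Finset.sum_const]
    rw [hconst]
    have hcard : (Finset.univ.filter (fun g : S => g ∈ Subgroup.center S)).card ≠ 0 := by
      refine Finset.card_ne_zero_of_mem (a := (1 : S)) ?_
      simp [Subgroup.one_mem]
    have hd1' : d₁ ≠ 0 := by
      simp only [hd1]
      exact Nat.cast_ne_zero.mpr Module.finrank_pos.ne'
    have hd2' : d₂ ≠ 0 := by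
      simp only [hd2]
      exact Nat.cast_ne_zero.mpr Module.finrank_pos.ne'
    simp only [nsmul_eq_mul]
    exact mul_ne_zero (Nat.cast_ne_zero.mpr hcard) (mul_ne_zero hd1' hd2')
  -- Invariants are nonzero.
  have hne : π.invariants ≠ ⊥ := by
    intro hbot
    rw [hbot] at havg
    simp only [finrank_bot, Nat.cast_zero] at havg
    rw [smul_eq_mul] at havg
    rcases mul_eq_zero.mp havg with h | h
    · exact (Invertible.ne_zero (⅟(Fintype.card S : ℂ))) h
    · exact hsum_ne h
  obtain ⟨T, hmem, hT0⟩ := (Submodule.ne_bot_iff _).mp hne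
  rw [Representation.mem_invariants] at hmem
  -- Equivariance of T.
  have hequiv : ∀ (s : S) (v : V₁), T ((ρ₁' s) v) = (ρ₂' s) (T v) := by
    intro s v
    have h := hmem s
    rw [hπ, Representation.linHom_apply] at h
    have h' := LinearMap.congr_fun h ((ρ₁' s) v)
    have hinvv : (ρ₁' s⁻¹) ((ρ₁' s) v) = v := by
      have : ρ₁' s⁻¹ * ρ₁' s = 1 := by rw [← map_mul, inv_mul_cancel, map_one]
      have := LinearMap.congr_fun this v
      simpa using this
    simp only [LinearMap.coe_comp, Function.comp_apply, hinvv] at h'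
    exact h'.symm
  -- Schur: T is bijective.
  have hker : LinearMap.ker T = ⊥ := by
    rcases hirr₁ (LinearMap.ker T) (fun s v hv => by
      rw [LinearMap.mem_ker] at hv ⊢
      rw [show ((ρ₁ s : V₁ →ₗ[ℂ] V₁) v) = (ρ₁' s) v from rfl, hequiv s v, hv, map_zero]) with
      h | h
    · exact h
    · exact absurd (LinearMap.ker_eq_top.mp h) hT0
  have hrange : LinearMap.range T = ⊤ := by
    rcases hirr₂ (LinearMap.range T) (fun s w hw => by
      obtain ⟨v, rfl⟩ := hw
      exact ⟨(ρ₁' s) v, (hequiv s v)⟩) with h | h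
    · exact absurd (LinearMap.range_eq_bot.mp h) hT0
    · exact h
  have hbij : Function.Bijective T :=
    ⟨LinearMap.ker_eq_bot.mp hker, LinearMap.range_eq_top.mp hrange⟩
  exact ⟨LinearEquiv.ofBijective T hbij, fun s v => hequiv s v⟩
end

section
/- Let S be a finite group, Z a subgroup of the center of S such that the quotient S/Z is commutative, and ι : Z → ℂˣ an injective group homomorphism. Let L be a maximal abelian subgroup of S. Then Z ⊆ L, and for every group homomorphism χ : L → ℂˣ whose restriction to Z equals ι, the induced representation Ind_L^S(χ) (the ℂ[S]-module ℂ[S] ⊗_{ℂ[L]} ℂ_χ) is an irreducible representation of S. -/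
/-- The left ideal of `ℂ[S]` generated by the elements `l - χ(l)·1` for `l ∈ L`.
The quotient `ℂ[S] ⧸ indIdeal L χ` is the canonical model of the induced module
`ℂ[S] ⊗_{ℂ[L]} ℂ_χ`. -/
noncomputable def indIdeal {S : Type*} [Group S] (L : Subgroup S) (χ : L →* ℂˣ) :
    Submodule (MonoidAlgebra ℂ S) (MonoidAlgebra ℂ S) :=
  Submodule.span (MonoidAlgebra ℂ S)
    {x : MonoidAlgebra ℂ S | ∃ l : L,
      x = MonoidAlgebra.of ℂ S (l : S) - (χ l : ℂ) • (1 : MonoidAlgebra ℂ S)}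

/-!
Since all commutators lie in `Z ≤ L`, the maximal abelian subgroup `L` is normal and equals its
own centralizer. For `u ∉ L` pick `l ∈ L` not commuting with `u`; then `l ↦ χ(u⁻¹ l u) / χ(l)` is a
character of `L` taking the value `ι(u⁻¹ l u l⁻¹) ≠ 1`, so its sum over `L` vanishes (Mackey's
criterion for a normal subgroup). Consequently `e = ∑ χ(l)⁻¹ l` maps every vector of the induced
module `V` into the line through `v₀ = [1]`, and its conjugation average `∑ₜ t e t⁻¹`, being central,
acts on `V = ℂ[S] v₀` as the scalar `|L|²`. Given `v ≠ 0`, some `e t⁻¹ v` is therefore a nonzero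
multiple of `v₀`, which generates `V`. Finally `V ≠ 0` because right multiplication by `e` kills
`indIdeal L χ` but not `1`.
-/

open MonoidAlgebra

theorem Subgroup.mem_of_forall_commute_of_maximal {G : Type*} [Group G] {L : Subgroup G}
    (hLcomm : ∀ x ∈ L, ∀ y ∈ L, x * y = y * x)
    (hLmax : ∀ L' : Subgroup G, (∀ x ∈ L', ∀ y ∈ L', x * y = y * x) → L ≤ L' → L' = L)
    {u : G} (hu : ∀ l ∈ L, u * l = l * u) : u ∈ L := by
  have hcomm : ∀ x ∈ insert u (L : Set G), ∀ y ∈ insert u (L : Set G), x * y = y * x := by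
    rintro x (rfl | hx) y (rfl | hy)
    · rfl
    · exact hu y hy
    · exact (hu x hx).symm
    · exact hLcomm x hx y hy
  have := isMulCommutative_closure hcomm
  rw [← hLmax _ (fun x hx y hy => setLike_mul_comm hx hy)
    (fun l hl => subset_closure (Set.mem_insert_of_mem u hl))]
  exact subset_closure (Set.mem_insert u _)

theorem Subgroup.normal_of_forall_commutator_mem {G : Type*} [Group G] {H : Subgroup G}
    (h : ∀ a b : G, a * b * a⁻¹ * b⁻¹ ∈ H) : H.Normal where
  conj_mem n hn g := by simpa using H.mul_mem (h g n) hn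

namespace InducedCharacter

variable {S : Type*} [Group S] {L : Subgroup S} (χ : L →* ℂˣ)

noncomputable def conjRatio [L.Normal] (u : S) : L →* ℂˣ :=
  χ.comp (MulAut.conjNormal u⁻¹).toMonoidHom / χ

theorem conjRatio_apply [L.Normal] (u : S) (l : L) :
    conjRatio χ u l = χ (MulAut.conjNormal u⁻¹ l) / χ l := rfl

theorem conjRatio_apply_eq [L.Normal] (u : S) (l : L) (hc : u⁻¹ * l * u * (l : S)⁻¹ ∈ L) :
    conjRatio χ u l = χ ⟨u⁻¹ * l * u * (l : S)⁻¹, hc⟩ := by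
  have : (⟨u⁻¹ * l * u * (l : S)⁻¹, hc⟩ : L) = MulAut.conjNormal u⁻¹ l * l⁻¹ :=
    Subtype.ext <| by simp
  rw [conjRatio_apply, this, map_mul, map_inv χ, div_eq_mul_inv]

theorem conjRatio_of_mem [L.Normal] (hLcomm : ∀ x ∈ L, ∀ y ∈ L, x * y = y * x) {u : S}
    (hu : u ∈ L) : conjRatio χ u = 1 := by
  refine MonoidHom.ext fun l => ?_
  have : MulAut.conjNormal u⁻¹ l = l := Subtype.ext <| by
    rw [MulAut.conjNormal_apply, inv_inv, hLcomm _ (L.inv_mem hu) _ l.2, inv_mul_cancel_right]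
  rw [conjRatio_apply, this, div_self', MonoidHom.one_apply]

noncomputable def indVec : MonoidAlgebra ℂ S ⧸ indIdeal L χ := Submodule.Quotient.mk 1

theorem smul_indVec (x : MonoidAlgebra ℂ S) : x • indVec χ = Submodule.Quotient.mk x := by
  rw [indVec, ← Submodule.Quotient.mk_smul, smul_eq_mul, mul_one]

theorem of_smul_indVec (l : L) : of ℂ S l • indVec χ = (χ l : ℂ) • indVec χ := by
  rw [indVec, ← Submodule.Quotient.mk_smul, ← Submodule.Quotient.mk_smul, Submodule.Quotient.eq,
    smul_eq_mul, mul_one]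
  exact Submodule.subset_span ⟨l, rfl⟩

section Fintype

variable [Fintype L]

theorem sum_conjRatio [L.Normal] (hLcomm : ∀ x ∈ L, ∀ y ∈ L, x * y = y * x)
    (hχ : ∀ u ∉ L, conjRatio χ u ≠ 1) (u : S) [Decidable (u ∈ L)] :
    ∑ l, (conjRatio χ u l : ℂ) = if u ∈ L then (Fintype.card L : ℂ) else 0 := by
  split_ifs with hu
  · simp [conjRatio_of_mem χ hLcomm hu]
  · exact sum_hom_units_eq_zero ((Units.coeHom ℂ).comp (conjRatio χ u))
      fun h => hχ u hu (MonoidHom.ext fun l => Units.ext (DFunLike.congr_fun h l))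

noncomputable def charSum : MonoidAlgebra ℂ S := ∑ l : L, (χ l⁻¹ : ℂ) • of ℂ S l

theorem of_mul_charSum (l : L) : of ℂ S l * charSum χ = (χ l : ℂ) • charSum χ := by
  simp only [charSum, Finset.mul_sum, Finset.smul_sum, mul_smul_comm, ← map_mul, smul_smul]
  refine Fintype.sum_equiv (Equiv.mulLeft l) _ _ fun m => ?_
  simp [mul_comm (χ l : ℂ)]

theorem charSum_ne_zero : charSum χ ≠ 0 := by
  classical
  intro h
  have := congrArg (fun x : MonoidAlgebra ℂ S => x.coeff 1) h
  simp [charSum, coeff_single, Finsupp.single_apply] at this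

theorem indIdeal_le_ker_mul_charSum :
    indIdeal L χ ≤ LinearMap.ker (LinearMap.toSpanSingleton _ _ (charSum χ)) := by
  refine Submodule.span_le.mpr ?_
  rintro _ ⟨l, rfl⟩
  rw [SetLike.mem_coe, LinearMap.mem_ker, LinearMap.toSpanSingleton_apply, smul_eq_mul, sub_mul,
    of_mul_charSum, smul_mul_assoc, one_mul, sub_self]

theorem indVec_ne_zero : indVec χ ≠ 0 := by
  rw [indVec, Ne, Submodule.Quotient.mk_eq_zero]
  exact fun h => charSum_ne_zero χ (by simpa using indIdeal_le_ker_mul_charSum χ h)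

variable {M : Type*} [AddCommGroup M] [Module (MonoidAlgebra ℂ S) M] [Module ℂ M]
  [IsScalarTower ℂ (MonoidAlgebra ℂ S) M] {m : M}

theorem charSum_smul_of_smul [L.Normal] (hm : ∀ l : L, of ℂ S l • m = (χ l : ℂ) • m) (u : S) :
    charSum χ • of ℂ S u • m = (∑ l, (conjRatio χ u l : ℂ)) • of ℂ S u • m := by
  have hconj (l : L) :
      of ℂ S l • of ℂ S u • m = (χ (MulAut.conjNormal u⁻¹ l) : ℂ) • of ℂ S u • m := by
    have : (l : S) * u = u * (MulAut.conjNormal u⁻¹ l : S) := by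
      rw [MulAut.conjNormal_apply]; group
    rw [smul_smul, ← map_mul, this, map_mul, mul_smul, hm, smul_comm]
  rw [charSum, Finset.sum_smul, Finset.sum_smul]
  refine Finset.sum_congr rfl fun l _ => ?_
  rw [smul_assoc, hconj, smul_smul, conjRatio_apply, map_inv, Units.val_div_eq_div_val,
    Units.val_inv_eq_inv_val, inv_mul_eq_div]

theorem charSum_smul_mem_span [L.Normal] (hLcomm : ∀ x ∈ L, ∀ y ∈ L, x * y = y * x)
    (hχ : ∀ u ∉ L, conjRatio χ u ≠ 1) (v : MonoidAlgebra ℂ S ⧸ indIdeal L χ) :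
    charSum χ • v ∈ ℂ ∙ indVec χ := by
  classical
  obtain ⟨x, rfl⟩ := Submodule.Quotient.mk_surjective _ v
  rw [← smul_indVec]
  induction x using MonoidAlgebra.induction_on with
  | of u =>
    rw [charSum_smul_of_smul χ (of_smul_indVec χ) u, sum_conjRatio χ hLcomm hχ]
    split_ifs with hu
    · refine Submodule.smul_mem _ _ ?_
      rw [show u = ((⟨u, hu⟩ : L) : S) from rfl, of_smul_indVec]
      exact Submodule.smul_mem _ _ (Submodule.mem_span_singleton_self _)
    · rw [zero_smul]
      exact Submodule.zero_mem _
  | add x y hx hy =>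
    rw [add_smul, smul_add]
    exact Submodule.add_mem _ hx hy
  | smul c x hx =>
    rw [smul_assoc, smul_comm]
    exact Submodule.smul_mem _ c hx

variable [Fintype S]

noncomputable def conjSum : MonoidAlgebra ℂ S := ∑ t : S, of ℂ S t * charSum χ * of ℂ S t⁻¹

theorem commute_conjSum (x : MonoidAlgebra ℂ S) : Commute (conjSum χ) x := by
  induction x using MonoidAlgebra.induction_on with
  | of s =>
    simp only [Commute, SemiconjBy, conjSum, Finset.sum_mul, Finset.mul_sum]
    refine (Fintype.sum_equiv (Equiv.mulLeft s) _ _ fun t => ?_).symm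
    simp only [Equiv.coe_mulLeft, ← mul_assoc, ← map_mul, mul_inv_rev]
    rw [mul_assoc _ (of ℂ S _), ← map_mul, inv_mul_cancel_right]
  | add x y hx hy => exact hx.add_right hy
  | smul c x hx => exact hx.smul_right c

theorem conjSum_smul [L.Normal] (hm : ∀ l : L, of ℂ S l • m = (χ l : ℂ) • m) :
    conjSum χ • m = (∑ t : S, ∑ l, (conjRatio χ t⁻¹ l : ℂ)) • m := by
  rw [conjSum, Finset.sum_smul, Finset.sum_smul]
  refine Finset.sum_congr rfl fun t _ => ?_
  rw [mul_smul, mul_smul, charSum_smul_of_smul χ hm, smul_comm, ← mul_smul, ← map_mul,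
    mul_inv_cancel, map_one, one_smul]

theorem conjSum_smul_eq_card_sq_smul [L.Normal] (hLcomm : ∀ x ∈ L, ∀ y ∈ L, x * y = y * x)
    (hχ : ∀ u ∉ L, conjRatio χ u ≠ 1) (hm : ∀ l : L, of ℂ S l • m = (χ l : ℂ) • m) :
    conjSum χ • m = ((Fintype.card L : ℂ) ^ 2) • m := by
  classical
  rw [conjSum_smul χ hm]
  congr 1
  simp only [sum_conjRatio χ hLcomm hχ, inv_mem_iff, Finset.sum_ite, Finset.sum_const_zero,
    add_zero, Finset.sum_const]
  rw [← Fintype.card_subtype, nsmul_eq_mul, sq]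

end Fintype

theorem isSimpleModule_quotient_indIdeal [Finite S] [L.Normal]
    (hLcomm : ∀ x ∈ L, ∀ y ∈ L, x * y = y * x)
    (hχ : ∀ u ∉ L, conjRatio χ u ≠ 1) :
    IsSimpleModule (MonoidAlgebra ℂ S) (MonoidAlgebra ℂ S ⧸ indIdeal L χ) := by
  classical
  have := Fintype.ofFinite S
  have hscalar (v : MonoidAlgebra ℂ S ⧸ indIdeal L χ) :
      conjSum χ • v = ((Fintype.card L : ℂ) ^ 2) • v := by
    obtain ⟨x, rfl⟩ := Submodule.Quotient.mk_surjective _ v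
    rw [← smul_indVec, ← mul_smul, (commute_conjSum χ x).eq, mul_smul,
      conjSum_smul_eq_card_sq_smul χ hLcomm hχ (of_smul_indVec χ), smul_comm]
  refine isSimpleModule_iff_toSpanSingleton_surjective.mpr
    ⟨⟨_, _, indVec_ne_zero χ⟩, fun v hv => ?_⟩
  obtain ⟨t, ht⟩ : ∃ t : S, charSum χ • of ℂ S t⁻¹ • v ≠ 0 := by
    by_contra! h
    have : ((Fintype.card L : ℂ) ^ 2) • v = 0 := by
      rw [← hscalar, conjSum, Finset.sum_smul]
      exact Finset.sum_eq_zero fun t _ => by rw [mul_smul, mul_smul, h, smul_zero]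
    exact hv ((smul_eq_zero.mp this).resolve_left (by simp))
  obtain ⟨a, ha⟩ := Submodule.mem_span_singleton.mp
    (charSum_smul_mem_span χ hLcomm hχ (of ℂ S t⁻¹ • v))
  have ha0 : a ≠ 0 := by
    rintro rfl
    exact ht (by rw [← ha, zero_smul])
  intro w
  obtain ⟨x, rfl⟩ := Submodule.Quotient.mk_surjective _ w
  refine ⟨x * (a⁻¹ • (charSum χ * of ℂ S t⁻¹)), ?_⟩
  rw [LinearMap.toSpanSingleton_apply, mul_smul, smul_assoc, mul_smul, ← ha, smul_smul,
    inv_mul_cancel₀ ha0, one_smul, smul_indVec]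

end InducedCharacter

/-- Let `S` be a finite group, `Z` a central subgroup with `S/Z`
commutative, `ι : Z → ℂˣ` injective, and `L` a maximal abelian subgroup of `S`. Then
`Z ⊆ L`, and for every character `χ : L → ℂˣ` restricting to `ι` on `Z`, the induced
representation `Ind_L^S χ = ℂ[S] ⊗_{ℂ[L]} ℂ_χ` is an irreducible (simple) `ℂ[S]`-module. -/
theorem stmt_12 (S : Type*) [Group S] [Finite S] (Z : Subgroup S)
    (hZ : Z ≤ Subgroup.center S)
    (hcomm : ∀ a b : S, a * b * a⁻¹ * b⁻¹ ∈ Z)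
    (ι : Z →* ℂˣ) (hι : Function.Injective ι)
    (L : Subgroup S)
    (hLcomm : ∀ x ∈ L, ∀ y ∈ L, x * y = y * x)
    (hLmax : ∀ L' : Subgroup S, (∀ x ∈ L', ∀ y ∈ L', x * y = y * x) → L ≤ L' → L' = L) :
    Z ≤ L ∧
    ∀ χ : L →* ℂˣ,
      (∀ (z : S) (hz : z ∈ Z) (hz' : z ∈ L), χ ⟨z, hz'⟩ = ι ⟨z, hz⟩) →
      IsSimpleModule (MonoidAlgebra ℂ S) (MonoidAlgebra ℂ S ⧸ indIdeal L χ) := by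
  have hZL : Z ≤ L := fun z hz => Subgroup.mem_of_forall_commute_of_maximal hLcomm hLmax
    fun l _ => (Subgroup.mem_center_iff.mp (hZ hz) l).symm
  refine ⟨hZL, fun χ hχ => ?_⟩
  have : L.Normal := Subgroup.normal_of_forall_commutator_mem fun a b => hZL (hcomm a b)
  refine InducedCharacter.isSimpleModule_quotient_indIdeal χ hLcomm fun u hu hψ => ?_
  obtain ⟨l, hl, hlu⟩ : ∃ l ∈ L, u * l ≠ l * u := by
    by_contra! h
    exact hu (Subgroup.mem_of_forall_commute_of_maximal hLcomm hLmax h)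
  have hc : u⁻¹ * l * u * l⁻¹ ∈ Z := by simpa using hcomm u⁻¹ l
  have hψl := InducedCharacter.conjRatio_apply_eq χ u ⟨l, hl⟩ (hZL hc)
  rw [hψ, MonoidHom.one_apply, hχ _ hc, eq_comm, map_eq_one_iff ι hι] at hψl
  have : u⁻¹ * (l * u) = l := by
    simpa [mul_assoc] using mul_inv_eq_one.mp (congrArg Subtype.val hψl)
  exact hlu (inv_mul_eq_iff_eq_mul.mp this).symm
end

section
/- Let S be a finite group, Z a subgroup of the center of S such that the quotient S/Z is commutative, and ι : Z → ℂˣ an injective group homomorphism. Let L be a maximal abelian subgroup of S, and let ρ : S → GL(V) be a finite-dimensional irreducible complex representation with ρ(z) = ι(z)·id for all z ∈ Z. Then there exists a group homomorphism χ : L → ℂˣ whose restriction to Z equals ι such that ρ is isomorphic to the induced representation Ind_L^S(χ) (the ℂ[S]-module ℂ[S] ⊗_{ℂ[L]} ℂ_χ). -/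
open LieModule in
theorem Module.End.exists_forall_apply_eq_smul_of_commute {K V G : Type*} [Field K]
    [IsAlgClosed K] [CharZero K] [AddCommGroup V] [Module K V] [FiniteDimensional K V]
    [Nontrivial V]
    (f : G → Module.End K V) (hf : ∀ g h, Commute (f g) (f h)) :
    ∃ v : V, v ≠ 0 ∧ ∀ g, ∃ c : K, f g v = c • v := by
  let A := lieSubalgebraOfSubalgebra K _ (Algebra.adjoin K (Set.range f))
  have : IsLieAbelian A := by
    refine ⟨fun ⟨x, hx⟩ ⟨y, hy⟩ => Subtype.ext ?_⟩
    have hcomm : Commute x y := Algebra.commute_of_mem_adjoin_of_forall_mem_commute hy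
      fun _ ⟨h, hh⟩ => (Algebra.commute_of_mem_adjoin_of_forall_mem_commute hx
        fun _ ⟨g, hg⟩ => hg ▸ hh ▸ hf h g).symm
    simp [LieRing.of_associative_ring_bracket, hcomm.eq]
  obtain ⟨χ, hχ⟩ := exists_nontrivial_weightSpace_of_isSolvable K A V
  obtain ⟨⟨v, hv⟩, hv0⟩ := exists_ne (0 : weightSpace V χ)
  have hfA (g : G) : f g ∈ A := Algebra.subset_adjoin ⟨g, rfl⟩
  exact ⟨v, by simpa using hv0, fun g => ⟨χ ⟨f g, hfA g⟩, (mem_weightSpace _ _).1 hv ⟨f g, hfA g⟩⟩⟩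

namespace Subgroup

variable {G : Type*} [Group G] {L Z : Subgroup G}

theorem mem_of_forall_mul_comm_of_maximal (hLcomm : ∀ x ∈ L, ∀ y ∈ L, x * y = y * x)
    (hLmax : ∀ L' : Subgroup G, (∀ x ∈ L', ∀ y ∈ L', x * y = y * x) → L ≤ L' → L' = L)
    {u : G} (hu : ∀ m ∈ L, u * m = m * u) : u ∈ L := by
  let T : Set G := insert u L
  have hT : ∀ x ∈ T, ∀ y ∈ T, x * y = y * x := by
    rintro x (rfl | hx) y (rfl | hy)
    exacts [rfl, hu y hy, (hu x hx).symm, hLcomm x hx y hy]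
  have hcl : ∀ x ∈ closure T, ∀ y ∈ closure T, x * y = y * x := fun x hx y hy =>
    Set.centralizer_centralizer_comm_of_comm hT x (closure_le_centralizer_centralizer T hx)
      y (closure_le_centralizer_centralizer T hy)
  rw [← hLmax (closure T) hcl fun x hx => subset_closure (Or.inr hx)]
  exact subset_closure (Or.inl rfl)

theorem normal_of_commutator_mem (hZL : Z ≤ L) (hcomm : ∀ a b : G, a * b * a⁻¹ * b⁻¹ ∈ Z) :
    L.Normal where
  conj_mem m hm g := by
    simpa using L.mul_mem (hZL (hcomm g m)) hm

theorem mem_of_forall_conjNormal_eq [L.Normal] {M : Type*} [Group M] (χ : L →* M)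
    (hZL : Z ≤ L) (hcomm : ∀ a b : G, a * b * a⁻¹ * b⁻¹ ∈ Z)
    (hχ : ∀ z (hz : z ∈ Z), χ ⟨z, hZL hz⟩ = 1 → z = 1)
    (hLcomm : ∀ x ∈ L, ∀ y ∈ L, x * y = y * x)
    (hLmax : ∀ L' : Subgroup G, (∀ x ∈ L', ∀ y ∈ L', x * y = y * x) → L ≤ L' → L' = L)
    {u : G} (hu : ∀ l : L, χ (MulAut.conjNormal u l) = χ l) : u ∈ L := by
  refine mem_of_forall_mul_comm_of_maximal hLcomm hLmax fun m hm => ?_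
  have hconj : MulAut.conjNormal u ⟨m, hm⟩ = ⟨u * m * u⁻¹ * m⁻¹, hZL (hcomm u m)⟩ * ⟨m, hm⟩ := by
    ext; simp [MulAut.conjNormal_apply]
  have hχc := hu ⟨m, hm⟩
  rw [hconj, map_mul, mul_eq_right] at hχc
  rw [← one_mul (m * u), ← hχ _ (hcomm u m) hχc]
  group

theorem injective_conjNormal_comp [L.Normal] {M : Type*} [Monoid M] (χ : L →* M)
    (hχ : ∀ u : G, (∀ l : L, χ (MulAut.conjNormal u l) = χ l) → u ∈ L) :
    Function.Injective fun q : G ⧸ L => χ.comp (MulAut.conjNormal q.out⁻¹).toMonoidHom := by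
  intro p q hpq
  rw [← QuotientGroup.out_eq' p, ← QuotientGroup.out_eq' q, QuotientGroup.eq]
  refine hχ _ fun l => ?_
  simpa only [MonoidHom.comp_apply, MulEquiv.coe_toMonoidHom, ← MulAut.mul_apply, ← map_mul,
    inv_mul_cancel, map_one, MulAut.one_apply]
    using DFunLike.congr_fun hpq (MulAut.conjNormal q.out l)

end Subgroup

theorem linearIndependent_of_apply_eq_smul {k G V ι : Type*} [Field k] [Monoid G]
    [AddCommGroup V] [Module k V] (f : G → Module.End k V) {χ : ι → G →* k}
    (hχ : Function.Injective χ) {w : ι → V} (hw : ∀ i, w i ≠ 0)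
    (hf : ∀ g i, f g (w i) = χ i g • w i) : LinearIndependent k w := by
  rw [linearIndependent_iff']
  intro s c hsum i hi
  obtain ⟨φ, hφ⟩ : ∃ φ : Module.Dual k V, φ (w i) ≠ 0 := by
    by_contra! h
    exact hw i ((Module.forall_dual_apply_eq_zero_iff k (w i)).1 h)
  have hchar : ∑ j ∈ s, (c j * φ (w j)) • (χ j : G → k) = 0 := by
    ext g
    have := congr_arg (fun x => φ (f g x)) hsum
    simpa [map_sum, hf, smul_smul, mul_assoc, mul_comm (φ _), Finset.sum_apply] using this
  have := linearIndependent_iff'.1 ((linearIndependent_monoidHom G k).comp χ hχ) s _ hchar i hi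
  exact (mul_eq_zero.1 this).resolve_right hφ

namespace Representation

section

variable {k G V : Type*} [Field k] [Group G] [AddCommGroup V] [Module k V]
  (ρ : Representation k G V)

theorem isIrreducible_of_forall_invariant [Nontrivial V]
    (h : ∀ W : Submodule k V, (∀ g v, v ∈ W → ρ g v ∈ W) → W = ⊥ ∨ W = ⊤) :
    IsIrreducible ρ where
  exists_pair_ne := ⟨⊥, ⊤, fun hbt => bot_ne_top (congrArg Subrepresentation.toSubmodule hbt)⟩
  eq_bot_or_eq_top σ := (h σ.toSubmodule σ.apply_mem_toSubmodule).imp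
    (fun hσ => Subrepresentation.toSubmodule_injective hσ)
    (fun hσ => Subrepresentation.toSubmodule_injective hσ)

theorem exists_monoidHom_of_forall_exists_smul {v : V} (hv : v ≠ 0)
    (h : ∀ g, ∃ c : k, ρ g v = c • v) : ∃ χ : G →* kˣ, ∀ g, ρ g v = (χ g : k) • v := by
  choose c hc using h
  have hone : c 1 = 1 := smul_left_injective k hv (by simp [← hc])
  have hmul (g h : G) : c (g * h) = c g * c h := smul_left_injective k hv (by
    dsimp only
    rw [← hc, map_mul, Module.End.mul_apply, hc h, map_smul, hc g, smul_smul, mul_comm (c h)])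
  exact ⟨MonoidHom.toHomUnits ⟨⟨c, hone⟩, hmul⟩, hc⟩

theorem apply_apply_eq_conjNormal_smul {N : Subgroup G} [N.Normal] (χ : N →* k) {v : V}
    (hv : ∀ n : N, ρ n v = χ n • v) (g : G) (n : N) :
    ρ n (ρ g v) = χ (MulAut.conjNormal g⁻¹ n) • ρ g v := by
  have : (n : G) * g = g * (MulAut.conjNormal g⁻¹ n : G) := by
    simp [mul_assoc]
  rw [← Module.End.mul_apply, ← map_mul, this, map_mul, Module.End.mul_apply, hv, map_smul]

end

section Induced

open MonoidAlgebra

variable {G V : Type*} [Group G] [AddCommGroup V] [Module ℂ V] (ρ : Representation ℂ G V)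
  {L : Subgroup G} {χ : L →* ℂˣ}

theorem mk_of_mul_eq_smul (g : G) (l : L) :
    (Submodule.Quotient.mk (of ℂ G (g * l)) : MonoidAlgebra ℂ G ⧸ indIdeal L χ) =
      (χ l : ℂ) • Submodule.Quotient.mk (of ℂ G g) := by
  rw [← Submodule.Quotient.mk_smul, Submodule.Quotient.eq]
  have hgen : of ℂ G (l : G) - (χ l : ℂ) • 1 ∈ indIdeal L χ := Submodule.subset_span ⟨l, rfl⟩
  convert (indIdeal L χ).smul_mem (of ℂ G g) hgen using 1
  rw [smul_eq_mul, mul_sub, mul_smul_comm, mul_one, map_mul]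

theorem span_mk_of_out_eq_top :
    Submodule.span ℂ (Set.range fun q : G ⧸ L =>
      (Submodule.Quotient.mk (of ℂ G q.out) : MonoidAlgebra ℂ G ⧸ indIdeal L χ)) = ⊤ := by
  refine Submodule.eq_top_iff'.2 fun x => ?_
  induction x using Submodule.Quotient.induction_on with | _ x
  induction x using MonoidAlgebra.induction_on with
  | of g =>
    have hg : g = (g : G ⧸ L).out * ((g : G ⧸ L).out⁻¹ * g) := by group
    have hl : (g : G ⧸ L).out⁻¹ * g ∈ L := QuotientGroup.leftRel_apply.1 (Quotient.mk_out g)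
    rw [hg, show (g : G ⧸ L).out⁻¹ * g = ((⟨_, hl⟩ : L) : G) from rfl, mk_of_mul_eq_smul]
    exact Submodule.smul_mem _ _ (Submodule.subset_span ⟨_, rfl⟩)
  | add a b ha hb => rw [Submodule.Quotient.mk_add]; exact Submodule.add_mem _ ha hb
  | smul r a ha => rw [Submodule.Quotient.mk_smul]; exact Submodule.smul_mem _ r ha

variable {v : V}

theorem indIdeal_le_ker (hv : ∀ l : L, ρ l v = (χ l : ℂ) • v) :
    indIdeal L χ ≤ LinearMap.ker
      (LinearMap.toSpanSingleton (MonoidAlgebra ℂ G) ρ.asModule (ρ.asModuleEquiv.symm v)) := by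
  rw [indIdeal, Submodule.span_le]
  rintro _ ⟨l, rfl⟩
  rw [SetLike.mem_coe, LinearMap.mem_ker, LinearMap.toSpanSingleton_apply, sub_smul, sub_eq_zero,
    ← asModuleEquiv_symm_map_rho, hv, map_smul, smul_one_smul]

noncomputable def indIdealLiftQ (hv : ∀ l : L, ρ l v = (χ l : ℂ) • v) :
    (MonoidAlgebra ℂ G ⧸ indIdeal L χ) →ₗ[MonoidAlgebra ℂ G] ρ.asModule :=
  (indIdeal L χ).liftQ _ (indIdeal_le_ker ρ hv)

theorem surjective_indIdealLiftQ [IsIrreducible ρ] (hv : ∀ l : L, ρ l v = (χ l : ℂ) • v)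
    (hv0 : v ≠ 0) : Function.Surjective (indIdealLiftQ ρ hv) := by
  intro y
  obtain ⟨a, rfl⟩ := IsSimpleModule.toSpanSingleton_surjective (MonoidAlgebra ℂ G)
    (ρ.asModuleEquiv.symm.map_ne_zero_iff.2 hv0) y
  exact ⟨Submodule.Quotient.mk a, rfl⟩

theorem injective_indIdealLiftQ (hv : ∀ l : L, ρ l v = (χ l : ℂ) • v)
    (hli : LinearIndependent ℂ fun q : G ⧸ L => ρ q.out v) :
    Function.Injective (indIdealLiftQ ρ hv) := by
  refine LinearMap.injective_of_linearIndependent (f := (indIdealLiftQ ρ hv).restrictScalars ℂ)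
    span_mk_of_out_eq_top ?_
  convert hli.map' ρ.asModuleEquiv.symm.toLinearMap ρ.asModuleEquiv.symm.ker using 1
  ext q
  exact (asModuleEquiv_symm_map_rho ρ _ v).symm

end Induced

end Representation

theorem stmt_13_general (S : Type*) [Group S] (Z : Subgroup S)
    (hZ : Z ≤ Subgroup.center S)
    (hcomm : ∀ a b : S, a * b * a⁻¹ * b⁻¹ ∈ Z)
    (ι : Z →* ℂˣ) (hι : Function.Injective ι)
    (L : Subgroup S)
    (hLcomm : ∀ x ∈ L, ∀ y ∈ L, x * y = y * x)
    (hLmax : ∀ L' : Subgroup S, (∀ x ∈ L', ∀ y ∈ L', x * y = y * x) → L ≤ L' → L' = L)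
    (V : Type*) [AddCommGroup V] [Module ℂ V] [FiniteDimensional ℂ V] [Nontrivial V]
    (ρ : S →* (V →ₗ[ℂ] V)ˣ)
    (hirr : ∀ W : Submodule ℂ V,
      (∀ (s : S) (v : V), v ∈ W → (ρ s : V →ₗ[ℂ] V) v ∈ W) → W = ⊥ ∨ W = ⊤)
    (hρ : ∀ z : Z, ((ρ (z : S) : (V →ₗ[ℂ] V)ˣ) : V →ₗ[ℂ] V) =
      (ι z : ℂ) • (1 : V →ₗ[ℂ] V)) :
    ∃ χ : L →* ℂˣ,
      (∀ (z : S) (hz : z ∈ Z) (hz' : z ∈ L), χ ⟨z, hz'⟩ = ι ⟨z, hz⟩) ∧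
      ∃ T : (MonoidAlgebra ℂ S ⧸ indIdeal L χ) ≃+ V,
        (∀ (a : ℂ) (x : MonoidAlgebra ℂ S ⧸ indIdeal L χ),
          T ((algebraMap ℂ (MonoidAlgebra ℂ S) a) • x) = a • T x) ∧
        (∀ (s : S) (x : MonoidAlgebra ℂ S ⧸ indIdeal L χ),
          T ((MonoidAlgebra.of ℂ S s) • x) = (ρ s : V →ₗ[ℂ] V) (T x)) := by
  have hZL : Z ≤ L := fun z hz => Subgroup.mem_of_forall_mul_comm_of_maximal hLcomm hLmax
    fun m _ => (Subgroup.mem_center_iff.1 (hZ hz) m).symm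
  have := Subgroup.normal_of_commutator_mem hZL hcomm
  let ρ' : Representation ℂ S V := (Units.coeHom _).comp ρ
  obtain ⟨v, hv0, hvL⟩ :=
    Module.End.exists_forall_apply_eq_smul_of_commute (fun l : L => ρ' l) fun g h => by
      rw [Commute, SemiconjBy, ← map_mul, ← map_mul, hLcomm g g.2 h h.2]
  obtain ⟨χ, hχ⟩ :=
    Representation.exists_monoidHom_of_forall_exists_smul (ρ'.comp L.subtype) hv0 hvL
  have hχι (z : S) (hz : z ∈ Z) (hz' : z ∈ L) : χ ⟨z, hz'⟩ = ι ⟨z, hz⟩ :=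
    Units.ext <| smul_left_injective ℂ hv0 <|
      (hχ ⟨z, hz'⟩).symm.trans
        (by simpa using congr($(hρ ⟨z, hz⟩) v) : (ρ z : V →ₗ[ℂ] V) v = _)
  have hstab (u : S) (hu : ∀ l : L, χ (MulAut.conjNormal u l) = χ l) : u ∈ L :=
    Subgroup.mem_of_forall_conjNormal_eq χ hZL hcomm
      (fun z hz h1 => congrArg Subtype.val (hι ((hχι z hz _ ▸ h1).trans (map_one ι).symm)))
      hLcomm hLmax hu
  have hli : LinearIndependent ℂ fun q : S ⧸ L => ρ' q.out v :=
    linearIndependent_of_apply_eq_smul (fun l : L => ρ' l)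
      (Subgroup.injective_conjNormal_comp ((Units.coeHom ℂ).comp χ)
        fun u hu => hstab u fun l => Units.ext (hu l))
      (fun _ => (map_ne_zero_iff _ (ρ'.apply_bijective _).injective).2 hv0)
      (fun l q => ρ'.apply_apply_eq_conjNormal_smul ((Units.coeHom ℂ).comp χ) hχ q.out l)
  have := ρ'.isIrreducible_of_forall_invariant hirr
  let e := LinearEquiv.ofBijective (ρ'.indIdealLiftQ hχ)
    ⟨ρ'.injective_indIdealLiftQ hχ hli, ρ'.surjective_indIdealLiftQ hχ hv0⟩
  let T := e.toAddEquiv.trans ρ'.asModuleEquiv.toAddEquiv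
  have hT (r : MonoidAlgebra ℂ S) (x) : T (r • x) = ρ'.asAlgebraHom r (T x) :=
    congrArg ρ'.asModuleEquiv (map_smul e r x)
  refine ⟨χ, hχι, T, fun a x => ?_, fun s x => ?_⟩
  · rw [hT, AlgHom.commutes, Module.algebraMap_end_apply]
  · rw [hT, ρ'.asAlgebraHom_of]
    rfl

/-- Let `S` be a finite group, `Z` a central subgroup with `S/Z`
commutative, `ι : Z → ℂˣ` injective, `L` a maximal abelian subgroup of `S`, and
`ρ : S → GL(V)` a finite-dimensional irreducible complex representation with
`ρ z = ι z • id` for `z ∈ Z`. Then there is a character `χ : L → ℂˣ` restricting to `ι`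
on `Z` such that `ρ` is isomorphic to the induced representation
`Ind_L^S χ = ℂ[S] ⊗_{ℂ[L]} ℂ_χ` (modelled as `ℂ[S] ⧸ indIdeal L χ`). -/
theorem stmt_13 (S : Type*) [Group S] [Finite S] (Z : Subgroup S)
    (hZ : Z ≤ Subgroup.center S)
    (hcomm : ∀ a b : S, a * b * a⁻¹ * b⁻¹ ∈ Z)
    (ι : Z →* ℂˣ) (hι : Function.Injective ι)
    (L : Subgroup S)
    (hLcomm : ∀ x ∈ L, ∀ y ∈ L, x * y = y * x)
    (hLmax : ∀ L' : Subgroup S, (∀ x ∈ L', ∀ y ∈ L', x * y = y * x) → L ≤ L' → L' = L)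
    (V : Type*) [AddCommGroup V] [Module ℂ V] [FiniteDimensional ℂ V] [Nontrivial V]
    (ρ : S →* (V →ₗ[ℂ] V)ˣ)
    (hirr : ∀ W : Submodule ℂ V,
      (∀ (s : S) (v : V), v ∈ W → (ρ s : V →ₗ[ℂ] V) v ∈ W) → W = ⊥ ∨ W = ⊤)
    (hρ : ∀ z : Z, ((ρ (z : S) : (V →ₗ[ℂ] V)ˣ) : V →ₗ[ℂ] V) =
      (ι z : ℂ) • (1 : V →ₗ[ℂ] V)) :
    ∃ χ : L →* ℂˣ,
      (∀ (z : S) (hz : z ∈ Z) (hz' : z ∈ L), χ ⟨z, hz'⟩ = ι ⟨z, hz⟩) ∧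
      ∃ T : (MonoidAlgebra ℂ S ⧸ indIdeal L χ) ≃+ V,
        (∀ (a : ℂ) (x : MonoidAlgebra ℂ S ⧸ indIdeal L χ),
          T ((algebraMap ℂ (MonoidAlgebra ℂ S) a) • x) = a • T x) ∧
        (∀ (s : S) (x : MonoidAlgebra ℂ S ⧸ indIdeal L χ),
          T ((MonoidAlgebra.of ℂ S s) • x) = (ρ s : V →ₗ[ℂ] V) (T x)) :=
  stmt_13_general S Z hZ hcomm ι hι L hLcomm hLmax V ρ hirr hρ
end

section
/- Let W be a group and A a commutative group, each acting on a set Π, such that the two actions commute: w•(a•σ) = a•(w•σ) for all w ∈ W, a ∈ A, σ ∈ Π. Fix σ ∈ Π, let X := Stab_A(σ), L := {a ∈ A : ∃ w ∈ W, w•σ = a•σ}, and W̄ := {w ∈ W : ∃ a ∈ A, w•σ = a•σ}. Then the assignment sending w ∈ W̄ to the class modulo X of any a ∈ A with w•σ = a•σ is a well-defined surjective group homomorphism Γ̄ : W̄ → L/X whose kernel equals Stab_W(σ). In particular Stab_W(σ) is normal in W̄ and W̄/Stab_W(σ) ≅ L/X. -/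
/-- Let a group `W` and a commutative group `A` act on a set `Ω`, with the
two actions commuting, and fix `σ ∈ Ω`. Let `X = Stab_A(σ)`, let `Lb ≤ A` be the subgroup
`L = {a : ∃ w, w•σ = a•σ}` and `Wb ≤ W` the subgroup `W̄ = {w : ∃ a, w•σ = a•σ}` (cf.
STATEMENT 14). Then sending `w ∈ W̄` to the class mod `X` of any `a` with `w•σ = a•σ` is a
well-defined group homomorphism `Γ̄ : W̄ → A/X` whose range is `L/X` (i.e. `Γ̄` is
surjective onto `L/X`) and whose kernel is `Stab_W(σ)`. In particular `Stab_W(σ)` is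
normal in `W̄` and `W̄/Stab_W(σ) ≅ L/X`. -/
theorem stmt_15 (W A : Type*) [Group W] [CommGroup A]
    (Ω : Type*) [MulAction W Ω] [MulAction A Ω]
    (hcomm : ∀ (w : W) (a : A) (σ : Ω), w • (a • σ) = a • (w • σ))
    (σ : Ω)
    (Wb : Subgroup W) (hWb : (Wb : Set W) = {w : W | ∃ a : A, w • σ = a • σ})
    (Lb : Subgroup A) (hLb : (Lb : Set A) = {a : A | ∃ w : W, w • σ = a • σ}) :
    ∃ Γ : Wb →* A ⧸ MulAction.stabilizer A σ,
      (∀ (w : Wb) (a : A), (w : W) • σ = a • σ → Γ w = QuotientGroup.mk a) ∧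
      Γ.range = Subgroup.map (QuotientGroup.mk' (MulAction.stabilizer A σ)) Lb ∧
      Γ.ker = (MulAction.stabilizer W σ).subgroupOf Wb ∧
      ((MulAction.stabilizer W σ).subgroupOf Wb).Normal ∧
      Nonempty ((Wb ⧸ Γ.ker) ≃*
        Subgroup.map (QuotientGroup.mk' (MulAction.stabilizer A σ)) Lb) := by
  have hmem : ∀ w : Wb, ∃ a : A, (w : W) • σ = a • σ := by
    intro w
    have := w.2
    rw [← SetLike.mem_coe, hWb] at this
    exact this
  have hkey : ∀ (w : Wb) (a b : A), (w : W) • σ = a • σ → (w : W) • σ = b • σ →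
      (QuotientGroup.mk a : A ⧸ MulAction.stabilizer A σ) = QuotientGroup.mk b := by
    intro w a b ha hb
    refine (QuotientGroup.eq).2 ?_
    show (a⁻¹ * b) • σ = σ
    rw [mul_smul, ← hb, ha, inv_smul_smul]
  choose f hf using hmem
  have hf' : ∀ (w : Wb) (a : A), (w : W) • σ = a • σ →
      (QuotientGroup.mk (f w) : A ⧸ MulAction.stabilizer A σ) = QuotientGroup.mk a := by
    intro w a ha; exact hkey w _ _ (hf w) ha
  let Γ : Wb →* A ⧸ MulAction.stabilizer A σ :=
    { toFun := fun w => QuotientGroup.mk (f w)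
      map_one' := by
        have h1 : ((1 : Wb) : W) • σ = (1 : A) • σ := by simp
        show (QuotientGroup.mk (f 1) : A ⧸ MulAction.stabilizer A σ) = 1
        rw [hf' 1 1 h1]; rfl
      map_mul' := by
        intro x y
        have hx := hf x
        have hy := hf y
        have hxy : ((x * y : Wb) : W) • σ = (f x * f y) • σ := by
          push_cast
          rw [mul_smul, hy, hcomm, hx, ← mul_smul, mul_comm]
        show (QuotientGroup.mk (f (x * y)) : A ⧸ MulAction.stabilizer A σ) =
          QuotientGroup.mk (f x) * QuotientGroup.mk (f y)
        rw [hf' (x * y) _ hxy]; rfl }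
  have hΓ : ∀ (w : Wb) (a : A), (w : W) • σ = a • σ → Γ w = QuotientGroup.mk a := by
    intro w a ha; exact hf' w a ha
  have hrange : Γ.range = Subgroup.map (QuotientGroup.mk' (MulAction.stabilizer A σ)) Lb := by
    ext q
    constructor
    · rintro ⟨w, rfl⟩
      refine ⟨f w, ?_, rfl⟩
      rw [hLb]
      exact ⟨w, hf w⟩
    · rintro ⟨a, haL, rfl⟩
      rw [hLb] at haL
      obtain ⟨w, hw⟩ := haL
      have hwWb : w ∈ Wb := by rw [← SetLike.mem_coe, hWb]; exact ⟨a, hw⟩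
      exact ⟨⟨w, hwWb⟩, hΓ ⟨w, hwWb⟩ a hw⟩
  have hker : Γ.ker = (MulAction.stabilizer W σ).subgroupOf Wb := by
    ext w
    simp only [MonoidHom.mem_ker, Subgroup.mem_subgroupOf, MulAction.mem_stabilizer_iff]
    constructor
    · intro h
      have h1 : (QuotientGroup.mk (f w) : A ⧸ MulAction.stabilizer A σ) = 1 := h
      have : f w ∈ MulAction.stabilizer A σ := by rwa [← QuotientGroup.eq_one_iff]
      have h2 : (f w) • σ = σ := this
      rw [hf w, h2]
    · intro h
      have h1 : ((w : W)) • σ = (1 : A) • σ := by simpa using h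
      show (QuotientGroup.mk (f w) : A ⧸ MulAction.stabilizer A σ) = 1
      rw [hf' w 1 h1]; rfl
  refine ⟨Γ, hΓ, hrange, hker, hker ▸ MonoidHom.normal_ker Γ,
    ⟨(QuotientGroup.quotientKerEquivRange Γ).trans (MulEquiv.subgroupCongr hrange)⟩⟩
end
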